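/- arXiv:1505.04867 — 8 statements merged into one kernel-verified Lean document; each statement's English description precedes it below -/
import Mathlib

section
/- Let n ≥ 2 and k ≥ 0 be integers and let G be the complete n-partite graph with parts of sizes r_1 < r_2 < ⋯ < r_n (all part sizes pairwise distinct). Then α_{k-reg}(G) = r_n for every k ≥ 0. -/
open SimpleGraph

/-- The degree of a vertex `v` in `G`: the number of neighbors of `v`. -/
noncomputable def degN {V : Type*} (G : SimpleGraph V) (v : V) : ℕ := {u | G.Adj v u}.ncard

/-- A set of vertices is `k`-independent if the induced subgraph has maximum degree at
most `k`, i.e. every vertex of the set has at most `k` neighbors inside the set. -/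
def IsKIndepSet {V : Type*} (G : SimpleGraph V) (k : ℕ) (S : Set V) : Prop :=
  ∀ v ∈ S, {u | u ∈ S ∧ G.Adj v u}.ncard ≤ k

/-- A set of vertices is regular if all its vertices have the same degree in `G`. -/
def IsRegularSet {V : Type*} (G : SimpleGraph V) (S : Set V) : Prop :=
  ∀ u ∈ S, ∀ v ∈ S, degN G u = degN G v

/-- The regular `k`-independence number `α_{k-reg}(G)`: the maximum cardinality of a set
of vertices that is both `k`-independent and regular. -/
noncomputable def regKIndepNum {V : Type*} (G : SimpleGraph V) (k : ℕ) : ℕ :=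
  sSup {m : ℕ | ∃ S : Set V, S.ncard = m ∧ IsKIndepSet G k S ∧ IsRegularSet G S}

lemma partSet_ncard (n : ℕ) (r : Fin n → ℕ) (i : Fin n) :
    (Set.range (Sigma.mk (β := fun j => Fin (r j)) i)).ncard = r i := by
  rw [← Nat.card_coe_set_eq, Nat.card_range_of_injective sigma_mk_injective,
    Nat.card_eq_fintype_card, Fintype.card_fin]

lemma mem_partSet (n : ℕ) (r : Fin n → ℕ) (i : Fin n) (u : Σ j, Fin (r j)) :
    u ∈ Set.range (Sigma.mk (β := fun j => Fin (r j)) i) ↔ u.1 = i := by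
  constructor
  · rintro ⟨x, rfl⟩; rfl
  · rintro h; obtain ⟨a, b⟩ := u; subst h; exact ⟨b, rfl⟩

lemma degN_eq (n : ℕ) (r : Fin n → ℕ) (v : Σ j, Fin (r j)) :
    degN (completeMultipartiteGraph fun i => Fin (r i)) v = (∑ j, r j) - r v.1 := by
  have h : {u | (completeMultipartiteGraph fun i => Fin (r i)).Adj v u}
      = (Set.range (Sigma.mk (β := fun j => Fin (r j)) v.1))ᶜ := by
    ext u
    simp only [Set.mem_compl_iff, mem_partSet, Set.mem_setOf_eq]
    constructor
    · intro h h'; exact h (h'.symm)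
    · intro h h'; exact h (h'.symm)
  have h2 := Set.ncard_add_ncard_compl
    (Set.range (Sigma.mk (β := fun j => Fin (r j)) v.1))
  rw [partSet_ncard] at h2
  have hcard : Nat.card (Σ j, Fin (r j)) = ∑ j, r j := by
    simp [Nat.card_eq_fintype_card]
  rw [degN, h]
  omega


/-- For a complete `n`-partite graph with pairwise distinct part sizes
`r 0 < r 1 < ⋯ < r (n-1)`, the regular `k`-independence number is the largest part
size, for every `k ≥ 0`. -/
theorem stmt_2 (n k : ℕ) (hn : 2 ≤ n) (r : Fin n → ℕ) (hpos : ∀ i, 1 ≤ r i)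
    (hmono : StrictMono r) :
    regKIndepNum (completeMultipartiteGraph (fun i : Fin n => Fin (r i))) k
      = r ⟨n - 1, by omega⟩ := by
  set G := completeMultipartiteGraph (fun i : Fin n => Fin (r i)) with hG
  set L : Fin n := ⟨n - 1, by omega⟩ with hL
  have hrN : ∀ i : Fin n, r i < ∑ j, r j := by
    intro i
    obtain ⟨j, hj⟩ : ∃ j : Fin n, j ≠ i := by
      have : Nontrivial (Fin n) := Fin.nontrivial_iff_two_le.mpr hn
      exact exists_ne i
    calc r i < r i + r j := by have := hpos j; omega
    _ ≤ ∑ j, r j := by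
      rw [add_comm]
      exact Finset.add_sum_erase _ r (Finset.mem_univ i) ▸
        (by
          have : r j ≤ ∑ x ∈ Finset.univ.erase i, r x :=
            Finset.single_le_sum (fun x _ => Nat.zero_le _)
              (Finset.mem_erase.mpr ⟨hj, Finset.mem_univ j⟩)
          omega)
  -- same degree iff same part
  have hdeg : ∀ u v : Σ j, Fin (r j), degN G u = degN G v → u.1 = v.1 := by
    intro u v h
    rw [degN_eq, degN_eq] at h
    have h1 := hrN u.1; have h2 := hrN v.1
    exact hmono.injective (by omega)
  apply le_antisymm
  · apply csSup_le
    · exact ⟨r L, Set.range (Sigma.mk (β := fun j => Fin (r j)) L), partSet_ncard n r L,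
        fun v hv => by
          have : {u | u ∈ Set.range (Sigma.mk (β := fun j => Fin (r j)) L) ∧ G.Adj v u} = ∅ := by
            ext u
            simp only [Set.mem_setOf_eq, Set.mem_empty_iff_false, iff_false, not_and]
            intro hu
            rw [mem_partSet] at hu
            rw [mem_partSet] at hv
            intro hadj
            exact hadj (hv.trans hu.symm)
          rw [this]; simp,
        fun u hu v hv => by
          rw [mem_partSet] at hu hv
          rw [degN_eq, degN_eq, hu, hv]⟩
    · rintro m ⟨S, rfl, _, hreg⟩
      rcases Set.eq_empty_or_nonempty S with rfl | ⟨v, hv⟩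
      · simp
      · have hsub : S ⊆ Set.range (Sigma.mk (β := fun j => Fin (r j)) v.1) := by
          intro u hu
          rw [mem_partSet]
          exact hdeg u v (hreg u hu v hv)
        calc S.ncard ≤ (Set.range (Sigma.mk (β := fun j => Fin (r j)) v.1)).ncard :=
              Set.ncard_le_ncard hsub (Set.toFinite _)
          _ = r v.1 := partSet_ncard n r v.1
          _ ≤ r L := hmono.monotone (by rw [Fin.le_def]; simp [hL]; omega)
  · apply le_csSup
    · exact ⟨Nat.card (Σ j, Fin (r j)), fun m ⟨S, hS, _, _⟩ => by
        rw [← hS, ← Set.ncard_univ]; exact Set.ncard_le_ncard (Set.subset_univ S) (Set.toFinite _)⟩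
    · exact ⟨Set.range (Sigma.mk (β := fun j => Fin (r j)) L), partSet_ncard n r L,
        fun v hv => by
          have : {u | u ∈ Set.range (Sigma.mk (β := fun j => Fin (r j)) L) ∧ G.Adj v u} = ∅ := by
            ext u
            simp only [Set.mem_setOf_eq, Set.mem_empty_iff_false, iff_false, not_and]
            intro hu
            rw [mem_partSet] at hu
            rw [mem_partSet] at hv
            intro hadj
            exact hadj (hv.trans hu.symm)
          rw [this]; simp,
        fun u hu v hv => by
          rw [mem_partSet] at hu hv
          rw [degN_eq, degN_eq, hu, hv]⟩
end

section
/- Let P_n be the path on n ≥ 5 vertices. Then α_{0-reg}(P_n) = ⌈(n−2)/2⌉; α_{1-reg}(P_n) = n − m, where m = ⌊(n−2)/3⌋ + 2 (equivalently, α_{1-reg}(P_n) = n − 2 − ⌊(n−2)/3⌋); and α_{k-reg}(P_n) = n − 2 for every k ≥ 2. -/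
open SimpleGraph

/-!
Only the two ends of `P_n` have degree 1, so a regular set with at least three vertices lies in
the interior `{1, …, n - 2}`, where every vertex has degree 2. There, a set is 0-independent
(resp. 1-independent) exactly when it contains no 2 (resp. 3) consecutive integers. A subset of
`{1, …, m}` with no `w` consecutive integers has at most `m - ⌊m / w⌋` elements, since each block of
`w` consecutive integers misses one, and the non-multiples of `w` attain this bound. For `k ≥ 2`
the whole interior is `k`-independent.
-/

def NoRun (w : ℕ) (T : Set ℕ) : Prop := ∀ a, ∃ i < w, a + i ∉ T

theorem NoRun.mono {w : ℕ} {T T' : Set ℕ} (h : NoRun w T) (hT' : T' ⊆ T) : NoRun w T' :=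
  fun a => (h a).imp fun _ hi => ⟨hi.1, fun hm => hi.2 (hT' hm)⟩

/- The top block `(m - w, m]` contains at most `w - 1` elements of `T`; induct on `m`. -/
theorem NoRun.ncard_le {w : ℕ} {T : Set ℕ} (h : NoRun w T) (hw : 0 < w) (m : ℕ)
    (hT : T ⊆ Set.Ioc 0 m) : T.ncard ≤ m - m / w := by
  induction m using Nat.strong_induction_on generalizing T with
  | _ m ih =>
  have hfin : T.Finite := (Set.finite_Ioc 0 m).subset hT
  rcases lt_or_ge m w with hmw | hmw
  · rw [Nat.div_eq_of_lt hmw, Nat.sub_zero]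
    simpa using Set.ncard_le_ncard hT
  obtain ⟨m', rfl⟩ := Nat.exists_eq_add_of_le' hmw
  obtain ⟨i, hi, hiT⟩ := h (m' + 1)
  have hlow : (T ∩ Set.Iic m').ncard ≤ m' - m' / w :=
    ih m' (by omega) (h.mono Set.inter_subset_left) fun x hx => ⟨(hT hx.1).1, hx.2⟩
  have hhigh : (T \ Set.Iic m').ncard ≤ w - 1 := by
    have hsub : T \ Set.Iic m' ⊆ Set.Ioc m' (m' + w) \ {m' + 1 + i} := fun x hx =>
      ⟨⟨not_le.1 hx.2, (hT hx.1).2⟩, fun hx' => hiT (hx' ▸ hx.1)⟩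
    calc (T \ Set.Iic m').ncard ≤ (Set.Ioc m' (m' + w) \ {m' + 1 + i}).ncard :=
          Set.ncard_le_ncard hsub
      _ = w - 1 := by
          rw [Set.ncard_sdiff_singleton_of_mem (by simp only [Set.mem_Ioc]; omega),
            Set.ncard_Ioc_nat]
          omega
  have hsplit := Set.ncard_inter_add_ncard_sdiff_eq_ncard T (Set.Iic m') hfin
  have := Nat.div_le_self m' w
  rw [Nat.add_div_right _ hw]
  omega

theorem noRun_not_dvd {w : ℕ} (hw : 0 < w) : NoRun w {x | ¬ w ∣ x} := by
  intro a
  refine ⟨(w - a % w) % w, Nat.mod_lt _ hw, not_not.2 ?_⟩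
  have := Nat.mod_lt a hw
  rw [Nat.dvd_iff_mod_eq_zero, Nat.add_mod_mod, ← Nat.mod_add_mod,
    Nat.add_sub_cancel' this.le, Nat.mod_self]

theorem ncard_Ioc_sdiff_dvd (w m : ℕ) : (Set.Ioc 0 m \ {x | w ∣ x}).ncard = m - m / w := by
  have hdvd : (Set.Ioc 0 m ∩ {x | w ∣ x}).ncard = m / w := by
    rw [← Nat.Ioc_filter_dvd_card_eq_div, ← Set.ncard_coe_finset, Finset.coe_filter]
    congr 1
    ext x
    simp [Set.mem_Ioc]
  have := Set.ncard_inter_add_ncard_sdiff_eq_ncard (Set.Ioc 0 m) {x | w ∣ x}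
  rw [Set.ncard_Ioc_nat] at this
  omega

theorem regKIndepNum_eq {V : Type*} {G : SimpleGraph V} {k t : ℕ}
    (hex : ∃ S : Set V, S.ncard = t ∧ IsKIndepSet G k S ∧ IsRegularSet G S)
    (hub : ∀ S : Set V, IsKIndepSet G k S → IsRegularSet G S → S.ncard ≤ t) :
    regKIndepNum G k = t :=
  IsGreatest.csSup_eq ⟨hex, by rintro _ ⟨S, rfl, hi, hr⟩; exact hub S hi hr⟩

section KIndep

variable {V : Type*} [Finite V] {G : SimpleGraph V} {S : Set V}

theorem isKIndepSet_zero_iff : IsKIndepSet G 0 S ↔ ∀ u ∈ S, ∀ v ∈ S, ¬ G.Adj u v := by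
  refine forall₂_congr fun v _ => ?_
  rw [Nat.le_zero, Set.ncard_eq_zero, Set.eq_empty_iff_forall_notMem]
  simp only [Set.mem_ofPred_eq, not_and]

theorem isKIndepSet_one_iff :
    IsKIndepSet G 1 S ↔ ∀ v ∈ S, ∀ a ∈ S, G.Adj v a → ∀ b ∈ S, G.Adj v b → a = b := by
  refine forall₂_congr fun v _ => ?_
  rw [Set.ncard_le_one]
  simp only [Set.mem_ofPred_eq, and_imp]

theorem isKIndepSet_of_degN_le {k : ℕ} (h : ∀ v ∈ S, degN G v ≤ k) : IsKIndepSet G k S :=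
  fun v hv => (Set.ncard_le_ncard fun _ hu => hu.2).trans (h v hv)

end KIndep

section Path

variable {n : ℕ}

def pathInterior (n : ℕ) : Set (Fin n) := Fin.val ⁻¹' Set.Ioc 0 (n - 2)

theorem mem_pathInterior {v : Fin n} : v ∈ pathInterior n ↔ 0 < v.val ∧ v.val + 1 < n := by
  have := v.isLt
  simp only [pathInterior, Set.mem_preimage, Set.mem_Ioc]
  omega

theorem ncard_pathInterior : (pathInterior n).ncard = n - 2 := by
  rw [pathInterior, Set.ncard_preimage_of_injective_subset_range Fin.val_injective
    fun x hx => ⟨⟨x, by simp only [Set.mem_Ioc] at hx; omega⟩, rfl⟩, Set.ncard_Ioc_nat]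
  omega

theorem degN_pathGraph_of_mem_pathInterior {v : Fin n} (hv : v ∈ pathInterior n) :
    degN (pathGraph n) v = 2 := by
  rw [mem_pathInterior] at hv
  have hnbrs : {u | (pathGraph n).Adj v u} = {⟨v.val - 1, by omega⟩, ⟨v.val + 1, hv.2⟩} := by
    ext u
    simp only [Set.mem_ofPred_eq, pathGraph_adj, Set.mem_insert_iff, Set.mem_singleton_iff,
      Fin.ext_iff]
    omega
  rw [degN, hnbrs, Set.ncard_pair (by simp only [ne_eq, Fin.ext_iff]; omega)]

theorem degN_pathGraph_le_one_of_notMem {v : Fin n} (hv : v ∉ pathInterior n) :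
    degN (pathGraph n) v ≤ 1 := by
  rw [mem_pathInterior] at hv
  refine (Set.ncard_le_one).2 fun a ha b hb => Fin.ext ?_
  simp only [Set.mem_ofPred_eq, pathGraph_adj] at ha hb
  have := a.isLt
  have := b.isLt
  omega

theorem isRegularSet_of_subset_pathInterior {S : Set (Fin n)} (hS : S ⊆ pathInterior n) :
    IsRegularSet (pathGraph n) S := fun u hu v hv => by
  rw [degN_pathGraph_of_mem_pathInterior (hS hu), degN_pathGraph_of_mem_pathInterior (hS hv)]

theorem IsRegularSet.ncard_le_two_or_subset_pathInterior {S : Set (Fin n)}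
    (h : IsRegularSet (pathGraph n) S) : S.ncard ≤ 2 ∨ S ⊆ pathInterior n := by
  refine or_iff_not_imp_right.2 fun hS => ?_
  obtain ⟨w, hwS, hw⟩ := Set.not_subset.1 hS
  have hends : Fin.val '' S ⊆ {0, n - 1} := by
    rintro _ ⟨v, hvS, rfl⟩
    have hv : v ∉ pathInterior n := fun hv => by
      have := degN_pathGraph_le_one_of_notMem hw
      rw [← h v hvS w hwS, degN_pathGraph_of_mem_pathInterior hv] at this
      omega
    rw [mem_pathInterior] at hv
    have := v.isLt
    simp only [Set.mem_insert_iff, Set.mem_singleton_iff]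
    omega
  rw [← Set.ncard_image_of_injective S Fin.val_injective]
  exact (Set.ncard_le_ncard hends).trans ((Set.ncard_insert_le _ _).trans (by simp))

theorem pathGraph_isKIndepSet_iff_noRun {k : ℕ} (hk : k ≤ 1) {S : Set (Fin n)} :
    IsKIndepSet (pathGraph n) k S ↔ NoRun (k + 2) (Fin.val '' S) := by
  interval_cases k
  · rw [isKIndepSet_zero_iff]
    constructor
    · intro h a
      by_contra! hrun
      obtain ⟨u, hu, hua⟩ := hrun 0 (by norm_num)
      obtain ⟨v, hv, hva⟩ := hrun 1 (by norm_num)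
      exact h u hu v hv (by rw [pathGraph_adj]; omega)
    · intro h u hu v hv huv
      rw [pathGraph_adj] at huv
      have huvS : ∀ x, x = u.val ∨ x = v.val → x ∈ Fin.val '' S := by
        rintro _ (rfl | rfl)
        exacts [⟨u, hu, rfl⟩, ⟨v, hv, rfl⟩]
      obtain ⟨i, hi, hiS⟩ := h (min u.val v.val)
      interval_cases i <;> exact hiS (huvS _ (by omega))
  · rw [isKIndepSet_one_iff]
    constructor
    · intro h a
      by_contra! hrun
      obtain ⟨u, hu, hua⟩ := hrun 0 (by norm_num)
      obtain ⟨v, hv, hva⟩ := hrun 1 (by norm_num)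
      obtain ⟨w, hw, hwa⟩ := hrun 2 (by norm_num)
      have := h v hv u hu (by rw [pathGraph_adj]; omega) w hw (by rw [pathGraph_adj]; omega)
      exact absurd (congrArg Fin.val this) (by omega)
    · intro h v hv a ha hva b hb hvb
      rw [pathGraph_adj] at hva hvb
      by_contra hab
      have hab' : a.val ≠ b.val := fun e => hab (Fin.ext e)
      have hrun : ∀ x, x = a.val ∨ x = v.val ∨ x = b.val → x ∈ Fin.val '' S := by
        rintro _ (rfl | rfl | rfl)
        exacts [⟨a, ha, rfl⟩, ⟨v, hv, rfl⟩, ⟨b, hb, rfl⟩]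
      obtain ⟨i, hi, hiS⟩ := h (v.val - 1)
      interval_cases i <;> exact hiS (hrun _ (by omega))

theorem regKIndepNum_pathGraph_of_le_one {k : ℕ} (hk : k ≤ 1) (hn : 5 ≤ n) :
    regKIndepNum (pathGraph n) k = (n - 2) - (n - 2) / (k + 2) := by
  set T := Set.Ioc 0 (n - 2) \ {x | (k + 2) ∣ x}
  have hT : T ⊆ Set.range (Fin.val : Fin n → ℕ) := fun x hx =>
    ⟨⟨x, by have := hx.1.2; omega⟩, rfl⟩
  refine regKIndepNum_eq ⟨Fin.val ⁻¹' T, ?_, ?_, ?_⟩ fun S hS hreg => ?_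
  · rw [Set.ncard_preimage_of_injective_subset_range Fin.val_injective hT, ncard_Ioc_sdiff_dvd]
  · rw [pathGraph_isKIndepSet_iff_noRun hk, Set.image_preimage_eq_of_subset hT]
    exact (noRun_not_dvd (by omega)).mono fun x hx => hx.2
  · exact isRegularSet_of_subset_pathInterior (Set.preimage_mono Set.sdiff_subset)
  rcases hreg.ncard_le_two_or_subset_pathInterior with hS2 | hsub
  · have : (n - 2) / (k + 2) ≤ (n - 2) / 2 := Nat.div_le_div_left (by omega) (by norm_num)
    omega
  · rw [← Set.ncard_image_of_injective S Fin.val_injective]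
    exact ((pathGraph_isKIndepSet_iff_noRun hk).1 hS).ncard_le (by omega) _
      (Set.image_subset_iff.2 hsub)

theorem regKIndepNum_pathGraph_of_two_le {k : ℕ} (hk : 2 ≤ k) (hn : 4 ≤ n) :
    regKIndepNum (pathGraph n) k = n - 2 := by
  refine regKIndepNum_eq ⟨pathInterior n, ncard_pathInterior,
    isKIndepSet_of_degN_le fun v hv => ?_, isRegularSet_of_subset_pathInterior subset_rfl⟩
    fun S _ hreg => ?_
  · rw [degN_pathGraph_of_mem_pathInterior hv]
    exact hk
  rcases hreg.ncard_le_two_or_subset_pathInterior with hS2 | hsub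
  · omega
  · exact ncard_pathInterior (n := n) ▸ Set.ncard_le_ncard hsub

end Path

/-- Regular `k`-independence numbers of the path `P_n` for `n ≥ 5`:
`α_{0-reg}(P_n) = ⌈(n-2)/2⌉`, `α_{1-reg}(P_n) = n - 2 - ⌊(n-2)/3⌋`, and
`α_{k-reg}(P_n) = n - 2` for all `k ≥ 2`. -/
theorem stmt_3 (n : ℕ) (hn : 5 ≤ n) :
    regKIndepNum (pathGraph n) 0 = (n - 2 + 1) / 2 ∧
    regKIndepNum (pathGraph n) 1 = n - 2 - (n - 2) / 3 ∧
    ∀ k : ℕ, 2 ≤ k → regKIndepNum (pathGraph n) k = n - 2 := by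
  refine ⟨?_, regKIndepNum_pathGraph_of_le_one le_rfl hn,
    fun k hk => regKIndepNum_pathGraph_of_two_le hk (by omega)⟩
  rw [regKIndepNum_pathGraph_of_le_one zero_le_one hn]
  omega
end

section
/- Let k ≥ 2 be an integer and let T be a tree on n vertices with diameter n − t, where 2 ≤ t ≤ n − 3. Then α_{k-reg}(T) = max{|D_1(T)|, |D_2(T)|}, i.e., the regular k-independence number of T equals the larger of the number of vertices of degree 1 and the number of vertices of degree 2 in T. -/
open SimpleGraph

/-!
A regular set lies inside a single degree class `D_d`. The class `D_1` is independent (two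
adjacent leaves would make up the whole tree) and `D_2` is `k`-independent because `k ≥ 2`, so
both are admissible. For `d ≥ 3` the class `D_d` is beaten by `D_1`: the handshake identity of a
tree reads `∑ v, (deg v - 2) = -2`, whence `|D_{≥3}| + 2 ≤ |D_1|`.
-/

namespace SimpleGraph

variable {V : Type*} {G : SimpleGraph V}

lemma degN_eq_degree (G : SimpleGraph V) (v : V) [Fintype (G.neighborSet v)] :
    degN G v = G.degree v := by
  rw [← card_neighborFinset_eq_degree, ← Set.ncard_coe_finset, coe_neighborFinset]
  rfl

lemma Preconnected.not_adj_of_degree_eq_one [G.LocallyFinite] (hG : G.Preconnected)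
    {u v w : V} (hu : G.degree u = 1) (hv : G.degree v = 1) (hwu : w ≠ u) (hwv : w ≠ v) :
    ¬ G.Adj u v := by
  intro huv
  obtain ⟨p, hp⟩ := hG.exists_isPath u w
  have hnil : ¬ p.Nil := Walk.not_nil_of_ne hwu.symm
  have hsnd : p.snd = v :=
    (degree_eq_one_iff_existsUnique_adj.mp hu).unique (p.adj_snd hnil) huv
  have hv_nbrs : (G.neighborSet v).Subsingleton := fun a ha b hb =>
    (degree_eq_one_iff_existsUnique_adj.mp hv).unique ha hb
  -- the path from `u` to `w` enters the leaf `v` first and could never leave it again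
  refine hp.isTrail.not_mem_support_of_subsingleton_neighborSet huv.ne' hwv.symm hv_nbrs ?_
  exact hsnd ▸ p.getVert_mem_support 1

lemma Preconnected.isIndepSet_setOf_degree_eq_one [Fintype V] [DecidableRel G.Adj]
    (hG : G.Preconnected) (hV : 2 < Fintype.card V) : G.IsIndepSet {v | G.degree v = 1} := by
  classical
  intro u hu v hv _
  obtain ⟨w, -, hw⟩ := Finset.exists_mem_notMem_of_card_lt_card
    (s := {u, v}) (t := Finset.univ) (Finset.card_le_two.trans_lt hV)
  simp only [Finset.mem_insert, Finset.mem_singleton, not_or] at hw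
  exact hG.not_adj_of_degree_eq_one hu hv hw.1 hw.2

lemma IsTree.ncard_setOf_three_le_degree_add_two_le [Fintype V] [DecidableRel G.Adj]
    [Nontrivial V] (hG : G.IsTree) :
    {v | 3 ≤ G.degree v}.ncard + 2 ≤ {v | G.degree v = 1}.ncard := by
  have hsum : ∑ v, ((G.degree v : ℤ) - 2) = -2 := by
    rw [Finset.sum_sub_distrib, ← Nat.cast_sum, sum_degrees_eq_twice_card_edges,
      Finset.sum_const, Finset.card_univ, ← hG.card_edgeFinset]
    push_cast
    ring
  -- each vertex contributes `degree - 2`: `-1` if a leaf, at least `1` if of degree `≥ 3`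
  have hle : ∑ v, ((if 3 ≤ G.degree v then 1 else 0 : ℤ) - if G.degree v = 1 then 1 else 0)
      ≤ ∑ v, ((G.degree v : ℤ) - 2) := Finset.sum_le_sum fun v _ => by
    have := hG.preconnected.degree_pos_of_nontrivial v
    split_ifs <;> omega
  rw [Finset.sum_sub_distrib, Finset.sum_boole, Finset.sum_boole, hsum] at hle
  simp only [Set.ncard_eq_toFinset_card', Set.toFinset_ofPred]
  omega

end SimpleGraph

section RegKIndep

variable {V : Type*} {G : SimpleGraph V} {k : ℕ} {S : Set V}

lemma isRegularSet_setOf_degN_eq (G : SimpleGraph V) (d : ℕ) :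
    IsRegularSet G {v | degN G v = d} :=
  fun _ hu _ hv => hu.trans hv.symm

lemma SimpleGraph.IsIndepSet.isKIndepSet (hS : G.IsIndepSet S) (k : ℕ) : IsKIndepSet G k S := by
  intro v hv
  have : {u | u ∈ S ∧ G.Adj v u} = ∅ :=
    Set.eq_empty_of_forall_notMem fun u hu => hS hv hu.1 (G.ne_of_adj hu.2) hu.2
  simp [this]

lemma isKIndepSet_of_forall_degN_le [Finite V] (hS : ∀ v ∈ S, degN G v ≤ k) :
    IsKIndepSet G k S :=
  fun v hv => (Set.ncard_le_ncard fun _ hu => hu.2).trans (hS v hv)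

lemma le_regKIndepNum [Finite V] (hS : IsKIndepSet G k S) (hreg : IsRegularSet G S) :
    S.ncard ≤ regKIndepNum G k :=
  le_csSup ⟨Nat.card V, by rintro _ ⟨T, rfl, -⟩; exact Set.ncard_le_card T⟩ ⟨S, rfl, hS, hreg⟩

lemma regKIndepNum_le_of_forall_ncard_le [Finite V] {m : ℕ}
    (h : ∀ d, {v | degN G v = d}.ncard ≤ m) :
    regKIndepNum G k ≤ m := by
  refine csSup_le ⟨0, ∅, by simp, fun _ h => h.elim, fun _ h => h.elim⟩ ?_
  rintro _ ⟨S, rfl, -, hreg⟩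
  obtain rfl | ⟨v, hv⟩ := S.eq_empty_or_nonempty
  · simp
  · exact (Set.ncard_le_ncard fun u hu => hreg u hu v hv).trans (h _)

end RegKIndep

theorem stmt_9_general {V : Type*} [Fintype V] (T : SimpleGraph V) (hT : T.IsTree)
    (n t k : ℕ) (hk : 2 ≤ k) (hn : Fintype.card V = n) (ht2 : 2 ≤ t) (ht3 : t ≤ n - 3) :
    regKIndepNum T k = max {v : V | degN T v = 1}.ncard {v : V | degN T v = 2}.ncard := by
  classical
  have hV : 2 < Fintype.card V := by omega
  have : Nontrivial V := Fintype.one_lt_card_iff_nontrivial.mp (by omega)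
  have hdeg : ∀ v, degN T v = T.degree v := fun v => degN_eq_degree T v
  have hpos : ∀ v, 0 < degN T v := fun v => hdeg v ▸ hT.preconnected.degree_pos_of_nontrivial v
  have hleaves : T.IsIndepSet {v | degN T v = 1} := by
    simpa only [hdeg] using hT.preconnected.isIndepSet_setOf_degree_eq_one hV
  have hcount : {v | 3 ≤ degN T v}.ncard + 2 ≤ {v | degN T v = 1}.ncard := by
    simpa only [hdeg] using hT.ncard_setOf_three_le_degree_add_two_le
  refine le_antisymm (regKIndepNum_le_of_forall_ncard_le fun d => ?_) <|
    max_le (le_regKIndepNum (hleaves.isKIndepSet k) (isRegularSet_setOf_degN_eq T 1))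
      (le_regKIndepNum (isKIndepSet_of_forall_degN_le fun v hv => hv.trans_le hk)
        (isRegularSet_setOf_degN_eq T 2))
  obtain rfl | rfl | rfl | hd : d = 0 ∨ d = 1 ∨ d = 2 ∨ 3 ≤ d := by omega
  · simp [fun v => (hpos v).ne']
  · exact le_max_left _ _
  · exact le_max_right _ _
  · have : {v | degN T v = d}.ncard ≤ {v | 3 ≤ degN T v}.ncard :=
      Set.ncard_le_ncard fun v (hv : degN T v = d) => show 3 ≤ degN T v by omega
    exact le_max_of_le_left (by omega)

/-- For `k ≥ 2` and a tree `T` on `n` vertices with diameter `n - t`, `2 ≤ t ≤ n - 3`,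
the regular `k`-independence number of `T` equals `max {|D_1(T)|, |D_2(T)|}`. -/
theorem stmt_9 {V : Type*} [Fintype V] (T : SimpleGraph V) (hT : T.IsTree)
    (n t k : ℕ) (hk : 2 ≤ k) (hn : Fintype.card V = n) (ht2 : 2 ≤ t) (ht3 : t ≤ n - 3)
    (hdiam : T.diam = n - t) :
    regKIndepNum T k = max {v : V | degN T v = 1}.ncard {v : V | degN T v = 2}.ncard :=
  stmt_9_general T hT n t k hk hn ht2 ht3
end

section
/- Let k ≥ 2 be an integer and let T be a tree on n ≥ 8 vertices with diameter n − t, where t = n − 4 (so the diameter of T is 4). Then ⌈(n−1)/2⌉ ≤ α_{k-reg}(T) ≤ t + 1 = n − 3. -/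
open SimpleGraph

section aux
set_option linter.unusedSectionVars false
variable {V : Type*} [Fintype V] {T : SimpleGraph V}

lemma path_length_eq_dist (hT : T.IsTree) {u v : V} (p : T.Walk u v) (hp : p.IsPath) :
    p.length = T.dist u v := by
  classical
  obtain ⟨q, hq⟩ := hT.isConnected.exists_walk_length_eq_dist u v
  have h1 : p = q.bypass := (hT.existsUnique_path u v).unique hp q.bypass_isPath
  have h2 : T.dist u v ≤ q.bypass.length := SimpleGraph.dist_le _
  have h3 : q.bypass.length ≤ q.length := q.length_bypass_le
  have h0 := congrArg Walk.length h1
  omega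

lemma tree_dist_step (hT : T.IsTree) {a b : V} (hab : T.Adj a b) (v : V) :
    T.dist v b = T.dist v a + 1 ∨ T.dist v a = T.dist v b + 1 := by
  classical
  obtain ⟨p, hp, -⟩ := hT.existsUnique_path v a
  have hlen : p.length = T.dist v a := path_length_eq_dist hT p hp
  by_cases hb : b ∈ p.support
  · right
    have h1 : (p.takeUntil b hb).length = T.dist v b :=
      path_length_eq_dist hT _ (hp.takeUntil hb)
    have h2 : (p.dropUntil b hb).length = T.dist b a :=
      path_length_eq_dist hT _ (hp.dropUntil hb)
    have h3 : T.dist b a = 1 := dist_eq_one_iff_adj.mpr hab.symm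
    have h4 := congrArg Walk.length (p.take_spec hb)
    rw [Walk.length_append] at h4
    omega
  · left
    have hP : (Walk.cons hab.symm p.reverse).reverse.IsPath := by
      apply Walk.IsPath.reverse
      rw [Walk.cons_isPath_iff]
      exact ⟨hp.reverse, by simpa using hb⟩
    have := path_length_eq_dist hT _ hP
    simp only [Walk.length_reverse, Walk.length_cons] at this
    omega

lemma leaf_unique_nbr {x u v : V} (hx : degN T x = 1) (hu : T.Adj x u) (hv : T.Adj x v) :
    u = v := by
  obtain ⟨a, ha⟩ := Set.ncard_eq_one.mp hx
  have h1 : u ∈ {y | T.Adj x y} := hu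
  have h2 : v ∈ {y | T.Adj x y} := hv
  rw [ha] at h1 h2
  simp only [Set.mem_singleton_iff] at h1 h2
  rw [h1, h2]

lemma degN_pos (hT : T.IsTree) (h2 : 2 ≤ Fintype.card V) (v : V) : 1 ≤ degN T v := by
  obtain ⟨u, hu⟩ := Fintype.exists_ne_of_one_lt_card (by omega) v
  obtain ⟨p⟩ := hT.isConnected v u
  cases p with
  | nil => exact absurd rfl hu.symm
  | cons h q =>
    show 1 ≤ {u | T.Adj v u}.ncard
    exact (Set.ncard_pos (Set.toFinite _)).mpr ⟨_, h⟩

lemma mem_support_getVert_one (hT : T.IsTree) {c v y : V} {Q : T.Walk c v} (hQ : Q.IsPath)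
    (hcy : T.Adj c y) (hmem : y ∈ Q.support) : Q.getVert 1 = y := by
  classical
  have htake : (Q.takeUntil y hmem).IsPath := hQ.takeUntil hmem
  have hE : (Walk.cons hcy Walk.nil).IsPath := by
    rw [Walk.cons_isPath_iff]
    exact ⟨Walk.IsPath.nil, by simp [hcy.ne]⟩
  have heq : Q.takeUntil y hmem = Walk.cons hcy Walk.nil :=
    (hT.existsUnique_path c y).unique htake hE
  have hspec := Q.take_spec hmem
  have := congrArg (fun w => Walk.getVert w 1) hspec
  rw [← this, Walk.getVert_append, heq]
  simp

end aux

/-- For `k ≥ 2` and a tree `T` on `n ≥ 8` vertices with diameter `n - t` where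
`t = n - 4` (so diameter `4`), we have `⌈(n-1)/2⌉ ≤ α_{k-reg}(T) ≤ t + 1 = n - 3`. -/
theorem stmt_12 {V : Type*} [Fintype V] (T : SimpleGraph V) (hT : T.IsTree)
    (n t k : ℕ) (hk : 2 ≤ k) (hn : Fintype.card V = n) (hn8 : 8 ≤ n)
    (ht : t = n - 4) (hdiam : T.diam = n - t) :
    (n - 1 + 1) / 2 ≤ regKIndepNum T k ∧ regKIndepNum T k ≤ t + 1 := by
  classical
  have hconn := hT.isConnected
  have hd4 : T.diam = 4 := by omega
  haveI : Nonempty V := Fintype.card_pos_iff.mp (by omega)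
  have hcard2 : 2 ≤ Fintype.card V := by omega
  obtain ⟨x0, x4, hx04⟩ := exists_dist_eq_diam (G := T)
  rw [hd4] at hx04
  obtain ⟨p, hplen⟩ := hconn.exists_walk_length_eq_dist x0 x4
  rw [hx04] at hplen
  set x1 := p.getVert 1 with hx1def
  set c := p.getVert 2 with hcdef
  set x3 := p.getVert 3 with hx3def
  have h01 : T.Adj x0 x1 := by
    have := p.adj_getVert_succ (i := 0) (by omega)
    rwa [p.getVert_zero] at this
  have h12 : T.Adj x1 c := p.adj_getVert_succ (by omega)
  have h23 : T.Adj c x3 := p.adj_getVert_succ (by omega)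
  have h34 : T.Adj x3 x4 := by
    have h := p.adj_getVert_succ (i := 3) (by omega)
    have h4 : p.getVert 4 = x4 := by
      have := p.getVert_length; rwa [hplen] at this
    rwa [h4] at h
  have hetop : T.ediam ≠ ⊤ := ediam_ne_top_of_diam_ne_zero (by rw [hd4]; omega)
  have hdle : ∀ u v : V, T.dist u v ≤ 4 := fun u v => hd4 ▸ dist_le_diam hetop
  have e01 : T.dist x0 x1 = 1 := dist_eq_one_iff_adj.mpr h01
  have e12 : T.dist x1 c = 1 := dist_eq_one_iff_adj.mpr h12
  have e23 : T.dist c x3 = 1 := dist_eq_one_iff_adj.mpr h23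
  have e34 : T.dist x3 x4 = 1 := dist_eq_one_iff_adj.mpr h34
  have tri : ∀ a b c' : V, T.dist a c' ≤ T.dist a b + T.dist b c' :=
    fun a b c' => hconn.dist_triangle
  have d0c : T.dist x0 c = 2 := by
    have h1 := tri x0 x1 c
    have h2 := tri x0 c x4
    have h3 := tri c x3 x4
    omega
  have dc4 : T.dist c x4 = 2 := by
    have h1 := tri c x3 x4
    have h2 := tri x0 c x4
    have h3 := tri x0 x1 c
    omega
  have d13 : T.dist x1 x3 = 2 := by
    have h1 := tri x1 c x3
    have h2 := tri x0 x1 x4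
    have h3 := tri x1 x3 x4
    omega
  have hx13 : x1 ≠ x3 := by
    intro h; rw [h, SimpleGraph.dist_self] at d13; omega
  have hx0c : x0 ≠ c := by
    intro h; rw [h, SimpleGraph.dist_self] at d0c; omega
  have hcx4 : c ≠ x4 := by
    intro h; rw [h, SimpleGraph.dist_self] at dc4; omega
  -- eccentricity of c is at most 2
  have hecc : ∀ v : V, T.dist v c ≤ 2 := by
    intro v
    by_contra hlt
    push_neg at hlt
    have hcv : c ≠ v := by
      intro h; rw [← h, SimpleGraph.dist_self] at hlt; omega
    obtain ⟨Q, hQ, -⟩ := hT.existsUnique_path c v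
    have hQlen : Q.length = T.dist c v := path_length_eq_dist hT Q hQ
    have hQ3 : 3 ≤ Q.length := by rw [hQlen, SimpleGraph.dist_comm]; omega
    have key : ∀ y z : V, T.Adj c y → T.Adj y z → T.dist c z = 2 → y ≠ Q.getVert 1 → False := by
      intro y z hcy hyz hcz2 hyw
      have hyQ : y ∉ Q.support := fun hmem =>
        hyw (mem_support_getVert_one hT hQ hcy hmem).symm
      have hzQ : z ∉ Q.support := by
        intro hmem
        have hcz : c ≠ z := by
          intro h; rw [h, SimpleGraph.dist_self] at hcz2; omega
        have hR : (Walk.cons hcy (Walk.cons hyz Walk.nil)).IsPath := by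
          rw [Walk.cons_isPath_iff, Walk.cons_isPath_iff]
          refine ⟨⟨Walk.IsPath.nil, by simp [hyz.ne]⟩, ?_⟩
          simp [hcy.ne, hcz]
        have heq : Q.takeUntil z hmem = Walk.cons hcy (Walk.cons hyz Walk.nil) :=
          (hT.existsUnique_path c z).unique (hQ.takeUntil hmem) hR
        have hy' : y ∈ (Q.takeUntil z hmem).support := by rw [heq]; simp
        exact hyQ (Q.support_takeUntil_subset hmem hy')
      have hW : (Walk.cons hyz.symm (Walk.cons hcy.symm Q)).IsPath := by
        rw [Walk.cons_isPath_iff, Walk.cons_isPath_iff]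
        refine ⟨⟨hQ, hyQ⟩, ?_⟩
        rw [Walk.support_cons]
        simp only [List.mem_cons, not_or]
        exact ⟨hyz.ne', hzQ⟩
      have hWlen := path_length_eq_dist hT _ hW
      simp only [Walk.length_cons] at hWlen
      have := hdle z v
      omega
    by_cases hx1w : x1 = Q.getVert 1
    · refine key x3 x4 h23 h34 dc4 ?_
      rw [← hx1w]
      exact fun h => hx13 h.symm
    · exact key x1 x0 h12.symm h01.symm (by rw [SimpleGraph.dist_comm]; exact d0c) hx1w
  have hdeg1 : ∀ v, 1 ≤ degN T v := degN_pos hT hcard2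
  -- vertices at distance 2 from c are leaves
  have hleaf2 : ∀ v : V, T.dist v c = 2 → degN T v = 1 := by
    intro v hv2
    by_contra hne
    have h2le : 2 ≤ degN T v := by have := hdeg1 v; omega
    have h2le' : 1 < {u | T.Adj v u}.ncard := h2le
    obtain ⟨w, hw, w', hw', hww'⟩ := (Set.one_lt_ncard (Set.toFinite _)).mp h2le'
    have hvc : v ≠ c := by
      intro h; rw [h, SimpleGraph.dist_self] at hv2; omega
    have hnbr : ∀ x, T.Adj v x → T.Adj c x := by
      intro x hx
      have hstep := tree_dist_step hT hx c
      have hcv : T.dist c v = 2 := by rw [SimpleGraph.dist_comm]; exact hv2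
      have hcx2 : T.dist c x ≤ 2 := by rw [SimpleGraph.dist_comm]; exact hecc x
      have hcx1 : T.dist c x = 1 := by omega
      exact dist_eq_one_iff_adj.mp hcx1
    have mkpath : ∀ x, T.Adj v x → ∃ P : T.Walk v c, P.IsPath ∧ P.getVert 1 = x := by
      intro x hx
      refine ⟨Walk.cons hx (Walk.cons (hnbr x hx).symm Walk.nil), ?_, ?_⟩
      · rw [Walk.cons_isPath_iff, Walk.cons_isPath_iff]
        refine ⟨⟨Walk.IsPath.nil, by simp [(hnbr x hx).ne']⟩, ?_⟩
        simp [hx.ne, hvc]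
      · rw [Walk.getVert_cons_succ]
        exact Walk.getVert_zero _
    obtain ⟨P1, hP1, hg1⟩ := mkpath w hw
    obtain ⟨P2, hP2, hg2⟩ := mkpath w' hw'
    have hPeq : P1 = P2 := (hT.existsUnique_path v c).unique hP1 hP2
    rw [hPeq, hg2] at hg1
    exact hww' hg1.symm
  -- every internal vertex other than c has a leaf neighbor
  have hInt : ∀ u : V, 2 ≤ degN T u → u ≠ c → ∃ x, T.Adj u x ∧ degN T x = 1 := by
    intro u h2 huc
    have h1 : T.dist u c = 1 := by
      have hle := hecc u
      have hne2 : T.dist u c ≠ 2 := fun h => by have := hleaf2 u h; omega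
      have hne0 : T.dist u c ≠ 0 := fun h => huc (hconn.dist_eq_zero_iff.mp h)
      omega
    have hucadj : T.Adj u c := dist_eq_one_iff_adj.mp h1
    have hex : ∃ x, T.Adj u x ∧ x ≠ c := by
      by_contra hno
      push_neg at hno
      have hsub : {x | T.Adj u x} ⊆ {c} := fun x hx => hno x hx
      have hle1 := Set.ncard_le_ncard hsub (Set.toFinite _)
      rw [Set.ncard_singleton] at hle1
      have : 2 ≤ {x | T.Adj u x}.ncard := h2
      omega
    obtain ⟨x, hux, hxc⟩ := hex
    have hstep := tree_dist_step hT hux c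
    have hcu : T.dist c u = 1 := by rw [SimpleGraph.dist_comm]; exact h1
    have hx0 : T.dist c x ≠ 0 := fun h => hxc (hconn.dist_eq_zero_iff.mp h).symm
    have hx2 : T.dist c x = 2 := by omega
    exact ⟨x, hux, hleaf2 x (by rw [SimpleGraph.dist_comm]; exact hx2)⟩
  have hcdeg : 2 ≤ degN T c :=
    (Set.one_lt_ncard (Set.toFinite _)).mpr ⟨x1, h12.symm, x3, h23, hx13⟩
  have hx1deg : 2 ≤ degN T x1 :=
    (Set.one_lt_ncard (Set.toFinite _)).mpr ⟨x0, h01.symm, c, h12, hx0c⟩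
  have hx3deg : 2 ≤ degN T x3 :=
    (Set.one_lt_ncard (Set.toFinite _)).mpr ⟨c, h23.symm, x4, h34, hcx4⟩
  -- no two leaves adjacent
  have hnoadj : ∀ u v : V, degN T u = 1 → degN T v = 1 → ¬ T.Adj u v := by
    intro u v hu hv huv
    have hucne : u ≠ c := fun h => by rw [h] at hu; omega
    have hvcne : v ≠ c := fun h => by rw [h] at hv; omega
    obtain ⟨P, hP, -⟩ := hT.existsUnique_path u c
    cases P with
    | nil => exact hucne rfl
    | cons h q =>
      have hbv := leaf_unique_nbr hu h huv
      subst hbv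
      cases q with
      | nil => exact hvcne rfl
      | cons h' q' =>
        have hbu := leaf_unique_nbr hv h' huv.symm
        subst hbu
        rw [Walk.cons_isPath_iff] at hP
        apply hP.2
        rw [Walk.support_cons]
        exact List.mem_cons_of_mem _ q'.start_mem_support
  -- the leaf set and internal set
  set L : Set V := {v | degN T v = 1} with hLdef
  set I : Set V := {v | 2 ≤ degN T v} with hIdef
  have hdisj : Disjoint L I := by
    rw [Set.disjoint_left]
    intro a ha ha'
    rw [hLdef, Set.mem_setOf_eq] at ha
    rw [hIdef, Set.mem_setOf_eq] at ha'
    omega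
  have hunion : L ∪ I = Set.univ := by
    ext v
    simp only [hLdef, hIdef, Set.mem_union, Set.mem_setOf_eq, Set.mem_univ, iff_true]
    have := hdeg1 v
    omega
  have hcount : L.ncard + I.ncard = n := by
    rw [← Set.ncard_union_eq hdisj (Set.toFinite _) (Set.toFinite _), hunion,
      Set.ncard_univ, Nat.card_eq_fintype_card, hn]
  have hcI : c ∈ I := by rw [hIdef, Set.mem_setOf_eq]; exact hcdeg
  have hI3 : 3 ≤ I.ncard := by
    have hsub : ({x1, c, x3} : Set V) ⊆ I := by
      intro a ha
      rw [hIdef, Set.mem_setOf_eq]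
      rcases ha with h | h | h <;> rw [h]
      · exact hx1deg
      · exact hcdeg
      · exact hx3deg
    have h3 : ({x1, c, x3} : Set V).ncard = 3 :=
      Set.ncard_eq_three.mpr ⟨x1, c, x3, h12.ne, hx13, h23.ne, rfl⟩
    rw [← h3]
    exact Set.ncard_le_ncard hsub (Set.toFinite _)
  -- injection from I \ {c} into L
  have hLI : I.ncard ≤ L.ncard + 1 := by
    set f : V → V := fun u => if h : ∃ x, T.Adj u x ∧ degN T x = 1 then h.choose else u
      with hfdef
    have hfspec : ∀ u ∈ I \ {c}, T.Adj u (f u) ∧ degN T (f u) = 1 := by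
      intro u hu
      obtain ⟨hu2, huc⟩ := hu
      rw [hIdef, Set.mem_setOf_eq] at hu2
      have hex := hInt u hu2 (by simpa using huc)
      rw [hfdef]
      simp only [dif_pos hex]
      exact hex.choose_spec
    have hmapsto : ∀ u ∈ I \ {c}, f u ∈ L := by
      intro u hu
      rw [hLdef, Set.mem_setOf_eq]
      exact (hfspec u hu).2
    have hinj : Set.InjOn f (I \ {c}) := by
      intro a ha b hb hab
      obtain ⟨h1, h2⟩ := hfspec a ha
      obtain ⟨h3, h4⟩ := hfspec b hb
      rw [← hab] at h3
      exact leaf_unique_nbr h2 h1.symm h3.symm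
    have hle : (I \ {c}).ncard ≤ L.ncard :=
      Set.ncard_le_ncard_of_injOn f hmapsto hinj (Set.toFinite _)
    have hd := Set.ncard_diff_singleton_add_one hcI (Set.toFinite _)
    omega
  -- bounded above
  have hbdd : BddAbove {m : ℕ | ∃ S : Set V, S.ncard = m ∧ IsKIndepSet T k S ∧ IsRegularSet T S} := by
    refine ⟨n, fun m hm => ?_⟩
    obtain ⟨S, hS, -, -⟩ := hm
    rw [← hS]
    calc S.ncard ≤ (Set.univ : Set V).ncard :=
          Set.ncard_le_ncard (Set.subset_univ S) (Set.toFinite _)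
      _ = n := by rw [Set.ncard_univ, Nat.card_eq_fintype_card, hn]
  -- L is a regular k-independent set
  have hmemL : L.ncard ∈ {m : ℕ | ∃ S : Set V, S.ncard = m ∧ IsKIndepSet T k S ∧ IsRegularSet T S} := by
    refine ⟨L, rfl, ?_, ?_⟩
    · intro v hv
      rw [hLdef, Set.mem_setOf_eq] at hv
      have hempty : {u | u ∈ L ∧ T.Adj v u} = ∅ := by
        ext u
        simp only [Set.mem_setOf_eq, Set.mem_empty_iff_false, iff_false, not_and]
        intro hu
        rw [hLdef, Set.mem_setOf_eq] at hu
        exact hnoadj v u hv hu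
      rw [hempty, Set.ncard_empty]
      omega
    · intro a ha b hb
      rw [hLdef, Set.mem_setOf_eq] at ha hb
      rw [ha, hb]
  have hlow : L.ncard ≤ regKIndepNum T k := le_csSup hbdd hmemL
  -- upper bound
  have hup : regKIndepNum T k ≤ n - 3 := by
    apply csSup_le
    · exact ⟨0, ∅, Set.ncard_empty _, fun v hv => absurd hv (Set.notMem_empty v),
        fun u hu => absurd hu (Set.notMem_empty u)⟩
    · intro m hm
      obtain ⟨S, hSm, hSind, hSreg⟩ := hm
      rcases S.eq_empty_or_nonempty with hSe | ⟨v0, hv0⟩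
      · rw [hSe, Set.ncard_empty] at hSm
        omega
      · rcases Nat.lt_or_ge (degN T v0) 2 with hd | hd
        · have hsub : S ⊆ L := by
            intro v hv
            rw [hLdef, Set.mem_setOf_eq]
            have h1 := hSreg v hv v0 hv0
            have h2 := hdeg1 v
            omega
          have hle := Set.ncard_le_ncard hsub (Set.toFinite _)
          omega
        · have hsub : S ⊆ I := by
            intro v hv
            rw [hIdef, Set.mem_setOf_eq]
            have h1 := hSreg v hv v0 hv0
            omega
          have hle := Set.ncard_le_ncard hsub (Set.toFinite _)
          omega
  constructor
  · have hhalf : (n - 1 + 1) / 2 ≤ L.ncard := by omega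
    omega
  · omega
end

section
/- Let k ≥ 2 be an integer and let T be a tree on n ≥ 8 vertices with diameter n − t, where t = n − 3 (so the diameter of T is 3). Then α_{k-reg}(T) = t + 1 = n − 2. -/
open SimpleGraph

lemma tree_path_len {V : Type*} {T : SimpleGraph V} (hT : T.IsTree) {a b : V}
    (p : T.Walk a b) (hp : p.IsPath) : p.length = T.dist a b := by
  classical
  obtain ⟨q, hq⟩ := (hT.isConnected a b).exists_walk_length_eq_dist
  have huniq := hT.IsAcyclic.path_unique ⟨p, hp⟩ ⟨q.bypass, q.bypass_isPath⟩
  have hpq : p = q.bypass := congrArg Subtype.val huniq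
  refine le_antisymm ?_ (T.dist_le p)
  rw [hpq]
  exact hq ▸ q.length_bypass_le

lemma dist_le_one_cases {V : Type*} {T : SimpleGraph V} (hT : T.IsTree) {a b : V}
    (h : T.dist a b ≤ 1) : a = b ∨ T.Adj a b := by
  classical
  obtain ⟨q, hq⟩ := (hT.isConnected a b).exists_walk_length_eq_dist
  rw [← hq] at h
  cases q with
  | nil => exact Or.inl rfl
  | cons hadj q' =>
    rw [SimpleGraph.Walk.length_cons] at h
    have : q'.length = 0 := by omega
    have := SimpleGraph.Walk.eq_of_length_eq_zero this
    subst this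
    exact Or.inr hadj

/-- helper: if `P` is a path from `w` to `u` avoiding `v`, where `u-v-y` is a path and
all distances are ≤ 3, then `dist w u ≤ 1`. -/
lemma helper {V : Type*} {T : SimpleGraph V} (hT : T.IsTree) {u v y w : V}
    (huv : T.Adj u v) (hvy : T.Adj v y) (hyu : y ≠ u)
    (P : T.Walk w u) (hp : P.IsPath) (hv : v ∉ P.support)
    (hd3 : ∀ a b, T.dist a b ≤ 3) : T.dist w u ≤ 1 := by
  classical
  have hy : y ∉ P.support := by
    intro hy
    have hQ : (P.dropUntil y hy).IsPath := hp.dropUntil hy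
    -- unique path from y to u is y - v - u
    have hyvu : (SimpleGraph.Walk.cons hvy.symm (SimpleGraph.Walk.cons huv.symm SimpleGraph.Walk.nil) : T.Walk y u).IsPath := by
      simp [SimpleGraph.Walk.cons_isPath_iff, hyu, huv.ne', hvy.ne']
    have := hT.IsAcyclic.path_unique ⟨P.dropUntil y hy, hQ⟩ ⟨_, hyvu⟩
    have hvd : v ∈ (P.dropUntil y hy).support := by
      have : (P.dropUntil y hy : T.Walk y u) = _ := congrArg Subtype.val this
      rw [this]
      simp
    exact hv (P.support_dropUntil_subset hy hvd)
  -- build path y - v - u - ... - w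
  have hr : (SimpleGraph.Walk.cons hvy.symm (SimpleGraph.Walk.cons huv.symm P.reverse) : T.Walk y w).IsPath := by
    rw [SimpleGraph.Walk.cons_isPath_iff, SimpleGraph.Walk.cons_isPath_iff]
    refine ⟨⟨hp.reverse, ?_⟩, ?_⟩
    · simpa [SimpleGraph.Walk.support_reverse] using hv
    · simp only [SimpleGraph.Walk.support_cons, List.mem_cons, SimpleGraph.Walk.support_reverse, List.mem_reverse]
      push_neg
      exact ⟨hvy.ne', hy⟩
  have hlen := tree_path_len hT _ hr
  simp only [SimpleGraph.Walk.length_cons, SimpleGraph.Walk.length_reverse] at hlen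
  have hPlen : P.length = T.dist w u := tree_path_len hT P hp
  have := hd3 y w
  omega

lemma close {V : Type*} {T : SimpleGraph V} (hT : T.IsTree) {x u v y : V}
    (hxu : T.Adj x u) (huv : T.Adj u v) (hvy : T.Adj v y)
    (hxv : x ≠ v) (huy : u ≠ y)
    (hd3 : ∀ a b, T.dist a b ≤ 3) (w : V) :
    w = u ∨ w = v ∨ T.Adj u w ∨ T.Adj v w := by
  classical
  by_contra hcon
  push_neg at hcon
  obtain ⟨hwu, hwv, hu, hv⟩ := hcon
  obtain ⟨q⟩ := hT.isConnected w u
  set pw := q.bypass with hpwdef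
  have hp : pw.IsPath := q.bypass_isPath
  by_cases hvmem : v ∈ pw.support
  · set pv := pw.takeUntil v hvmem with hpvdef
    have hpv : pv.IsPath := hp.takeUntil hvmem
    have hund : pw.support.Nodup := hp.support_nodup
    rw [← pw.take_spec hvmem, SimpleGraph.Walk.support_append] at hund
    have hdisj := List.disjoint_of_nodup_append hund
    have humem : u ∈ (pw.dropUntil v hvmem).support.tail :=
      SimpleGraph.Walk.end_mem_tail_support_of_ne huv.ne' _
    have hu_not : u ∉ pv.support := fun h => hdisj h humem
    have := helper hT huv.symm hxu.symm hxv pv hpv hu_not hd3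
    rcases dist_le_one_cases hT this with h | h
    · exact hwv h
    · exact hv h.symm
  · have := helper hT huv hvy huy.symm pw hp hvmem hd3
    rcases dist_le_one_cases hT this with h | h
    · exact hwu h
    · exact hu h.symm

lemma no_second_nbr {V : Type*} [Fintype V] {T : SimpleGraph V} [DecidableRel T.Adj]
    (hT : T.IsTree) {u v w : V} (huv : T.Adj u v)
    (hclose : ∀ z, z = u ∨ z = v ∨ T.Adj u z ∨ T.Adj v z)
    (hwu : w ≠ u) (hwv : w ≠ v) (huw : T.Adj u w) (h2 : 2 ≤ T.degree w) : False := by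
  classical
  obtain ⟨z, hzmem, hzu⟩ := Finset.exists_mem_ne (by rw [SimpleGraph.card_neighborFinset_eq_degree]; omega : 1 < (T.neighborFinset w).card) u
  rw [SimpleGraph.mem_neighborFinset] at hzmem
  have hwz : T.Adj w z := hzmem
  rcases hclose z with h | h | h | h
  · exact hzu h
  · subst h
    have hP2 : (SimpleGraph.Walk.cons huw (SimpleGraph.Walk.cons hwz SimpleGraph.Walk.nil) : T.Walk u z).IsPath := by
      simp [SimpleGraph.Walk.cons_isPath_iff, huw.ne, huv.ne, hwv]
    have := hT.IsAcyclic.path_unique (SimpleGraph.Path.singleton huv) ⟨_, hP2⟩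
    have := congrArg (fun p : T.Path u z => (p : T.Walk u z).length) this
    simp [SimpleGraph.Path.singleton] at this
  · have hP2 : (SimpleGraph.Walk.cons huw (SimpleGraph.Walk.cons hwz SimpleGraph.Walk.nil) : T.Walk u z).IsPath := by
      simp [SimpleGraph.Walk.cons_isPath_iff, huw.ne, hzu.symm, hwz.ne]
    have := hT.IsAcyclic.path_unique (SimpleGraph.Path.singleton h) ⟨_, hP2⟩
    have := congrArg (fun p : T.Path u z => (p : T.Walk u z).length) this
    simp [SimpleGraph.Path.singleton] at this
  · have hP2 : (SimpleGraph.Walk.cons huw (SimpleGraph.Walk.cons hwz (SimpleGraph.Walk.cons h.symm SimpleGraph.Walk.nil)) : T.Walk u v).IsPath := by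
      simp [SimpleGraph.Walk.cons_isPath_iff, huw.ne, hzu.symm, hwz.ne, huv.ne, hwv, h.ne']
    have := hT.IsAcyclic.path_unique (SimpleGraph.Path.singleton huv) ⟨_, hP2⟩
    have := congrArg (fun p : T.Path u v => (p : T.Walk u v).length) this
    simp [SimpleGraph.Path.singleton] at this

lemma leaf_of_close {V : Type*} [Fintype V] {T : SimpleGraph V} [DecidableRel T.Adj]
    (hT : T.IsTree) {u v : V} (huv : T.Adj u v)
    (hclose : ∀ z, z = u ∨ z = v ∨ T.Adj u z ∨ T.Adj v z)
    {w : V} (hwu : w ≠ u) (hwv : w ≠ v) : T.degree w = 1 := by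
  classical
  have hadj : T.Adj u w ∨ T.Adj v w := by
    rcases hclose w with h | h | h | h
    · exact absurd h hwu
    · exact absurd h hwv
    · exact Or.inl h
    · exact Or.inr h
  have hpos : 0 < T.degree w := by
    rw [SimpleGraph.degree_pos_iff_exists_adj]
    rcases hadj with h | h
    · exact ⟨u, h.symm⟩
    · exact ⟨v, h.symm⟩
  have hle : ¬ 2 ≤ T.degree w := by
    intro h2
    rcases hadj with h | h
    · exact no_second_nbr hT huv hclose hwu hwv h h2
    · have hclose' : ∀ z, z = v ∨ z = u ∨ T.Adj v z ∨ T.Adj u z := by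
        intro z; rcases hclose z with h' | h' | h' | h' <;> tauto
      exact no_second_nbr hT huv.symm hclose' hwv hwu h h2
  omega

lemma degN_eq_s13 {V : Type*} [Fintype V] (T : SimpleGraph V) [DecidableRel T.Adj] (v : V) :
    degN T v = T.degree v := by
  have h1 : {u | T.Adj v u} = (T.neighborSet v : Set V) := rfl
  rw [degN, h1, Set.ncard_eq_toFinset_card']
  simp [SimpleGraph.neighborFinset_def, SimpleGraph.degree]

lemma deg_pos {V : Type*} [Fintype V] [Nontrivial V] {T : SimpleGraph V} [DecidableRel T.Adj]
    (hc : T.Connected) (z : V) : 0 < T.degree z := by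
  obtain ⟨z', hne⟩ := exists_ne z
  obtain ⟨q⟩ := hc.preconnected z z'
  cases q with
  | nil => exact absurd rfl hne.symm
  | cons h _ => exact (SimpleGraph.degree_pos_iff_exists_adj T z).mpr ⟨_, h⟩

lemma upper_bound {V : Type*} [Fintype V] {T : SimpleGraph V} [DecidableRel T.Adj]
    (hT : T.IsTree) {n : ℕ} (hn : Fintype.card V = n) (hn8 : 8 ≤ n)
    {x y : V} (hxy : T.dist x y = 3)
    (S : Set V) (hreg : IsRegularSet T S) : S.ncard ≤ n - 2 := by
  classical
  have hnt : Nontrivial V := Fintype.one_lt_card_iff_nontrivial.mp (by omega)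
  by_contra hcon
  push_neg at hcon
  set F := S.toFinset with hF
  have hFcard : S.ncard = F.card := Set.ncard_eq_toFinset_card' S
  have hFn : F.card ≤ n := hn ▸ F.card_le_univ
  have hsum : ∑ v, T.degree v = 2 * (n - 1) := by
    have hce := hT.card_edgeFinset
    rw [SimpleGraph.sum_degrees_eq_twice_card_edges]
    rw [hn] at hce
    omega
  have hFne : F.Nonempty := Finset.card_pos.mp (by omega)
  obtain ⟨v₀, hv₀⟩ := hFne
  set d := T.degree v₀ with hdd
  have hregd : ∀ w ∈ F, T.degree w = d := by
    intro w hw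
    have := hreg w (Set.mem_toFinset.mp hw) v₀ (Set.mem_toFinset.mp hv₀)
    rwa [degN_eq_s13, degN_eq_s13] at this
  have hsumF : ∑ w ∈ F, T.degree w = d * F.card := by
    rw [Finset.sum_congr rfl hregd, Finset.sum_const, smul_eq_mul, mul_comm]
  have hd1 : 1 ≤ d := deg_pos hT.isConnected v₀
  have hsplit : ∑ w ∈ F, T.degree w + ∑ w ∈ Fᶜ, T.degree w = ∑ v, T.degree v :=
    Finset.sum_add_sum_compl F _
  have hcases : F.card = n - 1 ∨ F.card = n := by omega
  rcases hcases with hc1 | hc2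
  · -- complement is a single vertex w₀ of degree n-1 : a universal vertex
    have hcompl : Fᶜ.card = 1 := by rw [Finset.card_compl, hn, hc1]; omega
    obtain ⟨w₀, hw₀⟩ := Finset.card_eq_one.mp hcompl
    have hsumc : ∑ w ∈ Fᶜ, T.degree w = T.degree w₀ := by rw [hw₀, Finset.sum_singleton]
    have hdw₀ : 0 < T.degree w₀ := deg_pos hT.isConnected w₀
    have hd_eq : d = 1 := by
      by_contra hd2
      have h2d : 2 ≤ d := by omega
      have := Nat.mul_le_mul_right (n - 1) h2d
      rw [hsumF, hsumc, hsum, hc1] at hsplit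
      omega
    have hdegw₀ : T.degree w₀ = n - 1 := by
      rw [hsumF, hsumc, hsum, hc1, hd_eq] at hsplit
      omega
    -- w₀ is adjacent to everything else
    have hsub : T.neighborFinset w₀ ⊆ Finset.univ.erase w₀ := by
      intro z hz
      rw [SimpleGraph.mem_neighborFinset] at hz
      exact Finset.mem_erase.mpr ⟨hz.ne', Finset.mem_univ z⟩
    have hecard : (Finset.univ.erase w₀).card = n - 1 := by
      rw [Finset.card_erase_of_mem (Finset.mem_univ w₀), Finset.card_univ, hn]
    have hEq : T.neighborFinset w₀ = Finset.univ.erase w₀ :=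
      Finset.eq_of_subset_of_card_le hsub (by
        rw [hecard, SimpleGraph.card_neighborFinset_eq_degree, hdegw₀])
    have hadj : ∀ z, z ≠ w₀ → T.Adj w₀ z := by
      intro z hz
      rw [← SimpleGraph.mem_neighborFinset, hEq]
      exact Finset.mem_erase.mpr ⟨hz, Finset.mem_univ z⟩
    have hxw : T.dist x w₀ ≤ 1 := by
      by_cases hx : x = w₀
      · rw [hx, SimpleGraph.dist_self]; omega
      · exact T.dist_le (SimpleGraph.Walk.cons (hadj x hx).symm SimpleGraph.Walk.nil)
    have hwy : T.dist w₀ y ≤ 1 := by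
      by_cases hy : y = w₀
      · rw [hy, SimpleGraph.dist_self]; omega
      · exact T.dist_le (SimpleGraph.Walk.cons (hadj y hy) SimpleGraph.Walk.nil)
    have htri := hT.isConnected.dist_triangle (u := x) (v := w₀) (w := y)
    omega
  · -- S is everything : impossible by degree sum
    have hFuniv : F = Finset.univ := Finset.eq_univ_of_card F (by rw [hc2, hn])
    have : d * n = 2 * (n - 1) := by
      rw [← hsum, ← hFuniv, hsumF, hc2]
    have hd2 : d = 1 ∨ 2 ≤ d := by omega
    rcases hd2 with h | h
    · rw [h] at this; omega
    · have := Nat.mul_le_mul_right n h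
      omega
/-- For `k ≥ 2` and a tree `T` on `n ≥ 8` vertices with diameter `n - t` where
`t = n - 3` (so diameter `3`), we have `α_{k-reg}(T) = t + 1 = n - 2`. -/

theorem stmt_13 {V : Type*} [Fintype V] (T : SimpleGraph V) (hT : T.IsTree)
    (n t k : ℕ) (hk : 2 ≤ k) (hn : Fintype.card V = n) (hn8 : 8 ≤ n)
    (ht : t = n - 3) (hdiam : T.diam = n - t) :
    regKIndepNum T k = t + 1 := by
  classical
  have hd3 : T.diam = 3 := by omega
  have hnt : Nontrivial V := Fintype.one_lt_card_iff_nontrivial.mp (by omega)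
  have hNe : Nonempty V := inferInstance
  have hdle : ∀ a b, T.dist a b ≤ 3 := by
    intro a b
    have hne : T.ediam ≠ ⊤ := ediam_ne_top_of_diam_ne_zero (by omega)
    have := T.dist_le_diam hne (u := a) (v := b)
    omega
  obtain ⟨x, y, hxy⟩ := exists_dist_eq_diam (G := T)
  rw [hd3] at hxy
  -- extract the diametral path x - u - v - y
  obtain ⟨q, hq⟩ := hT.isConnected.exists_walk_length_eq_dist x y
  have hp : q.bypass.IsPath := q.bypass_isPath
  have hplen : q.bypass.length = 3 := by rw [tree_path_len hT _ hp, hxy]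
  obtain ⟨u, hxu, p1⟩ : ∃ u, ∃ _ : T.Adj x u, ∃ p1 : T.Walk u y, p1.IsPath ∧ p1.length = 2 ∧
      x ∉ p1.support := by
    cases hq' : q.bypass with
    | nil => rw [hq'] at hplen; simp at hplen
    | cons h p =>
      rw [hq'] at hplen hp
      rw [SimpleGraph.Walk.cons_isPath_iff] at hp
      refine ⟨_, h, p, hp.1, ?_, hp.2⟩
      simpa using hplen
  obtain ⟨p1, hp1, hp1len, hxp1⟩ := p1
  obtain ⟨v, huv, p2⟩ : ∃ v, ∃ _ : T.Adj u v, ∃ p2 : T.Walk v y, p2.IsPath ∧ p2.length = 1 ∧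
      u ∉ p2.support := by
    cases hq' : p1 with
    | nil => rw [hq'] at hp1len; simp at hp1len
    | cons h p =>
      rw [hq'] at hp1len hp1 hxp1
      rw [SimpleGraph.Walk.cons_isPath_iff] at hp1
      refine ⟨_, h, p, hp1.1, ?_, hp1.2⟩
      simpa using hp1len
  obtain ⟨p2, hp2, hp2len, hup2⟩ := p2
  have hvy : T.Adj v y := by
    cases hq' : p2 with
    | nil => rw [hq'] at hp2len; simp at hp2len
    | cons h p =>
      rw [hq'] at hp2len
      simp only [SimpleGraph.Walk.length_cons] at hp2len
      have := SimpleGraph.Walk.eq_of_length_eq_zero (by omega : p.length = 0)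
      subst this
      exact h
  -- distinctness
  have hxv : x ≠ v := by
    intro h
    subst h
    have := T.dist_le (SimpleGraph.Walk.cons hvy SimpleGraph.Walk.nil)
    rw [SimpleGraph.Walk.length_cons, SimpleGraph.Walk.length_nil] at this
    omega
  have huy : u ≠ y := by
    intro h
    subst h
    have := T.dist_le (SimpleGraph.Walk.cons hxu SimpleGraph.Walk.nil)
    rw [SimpleGraph.Walk.length_cons, SimpleGraph.Walk.length_nil] at this
    omega
  have hclose := close hT hxu huv hvy hxv huy hdle
  -- the leaf set
  set S : Set V := Set.univ \ {u, v} with hSdef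
  have hmem : ∀ w, w ∈ S ↔ (w ≠ u ∧ w ≠ v) := by
    intro w
    simp [hSdef]
  have hdeg1 : ∀ w ∈ S, T.degree w = 1 := by
    intro w hw
    rw [hmem] at hw
    exact leaf_of_close hT huv hclose hw.1 hw.2
  have hScard : S.ncard = n - 2 := by
    rw [hSdef, Set.ncard_diff (Set.subset_univ _), Set.ncard_univ,
      Nat.card_eq_fintype_card, hn, Set.ncard_pair huv.ne]
  -- S is k-independent
  have hindep : IsKIndepSet T k S := by
    intro w hw
    have hempty : {z | z ∈ S ∧ T.Adj w z} = ∅ := by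
      ext z
      simp only [Set.mem_setOf_eq, Set.mem_empty_iff_false, iff_false, not_and]
      intro hzS hadj
      rw [hmem] at hw hzS
      have hnbr : T.Adj u w ∨ T.Adj v w := by
        rcases hclose w with h | h | h | h
        · exact absurd h hw.1
        · exact absurd h hw.2
        · exact Or.inl h
        · exact Or.inr h
      have hcard1 : (T.neighborFinset w).card = 1 := by
        rw [SimpleGraph.card_neighborFinset_eq_degree]
        exact hdeg1 w (by rw [hmem]; exact hw)
      have hzmem : z ∈ T.neighborFinset w := (SimpleGraph.mem_neighborFinset T w z).mpr hadj
      rcases hnbr with h | h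
      · have humem : u ∈ T.neighborFinset w := (SimpleGraph.mem_neighborFinset T w u).mpr h.symm
        have : z = u := Finset.card_le_one.mp (by omega) z hzmem u humem
        exact hzS.1 this
      · have hvmem : v ∈ T.neighborFinset w := (SimpleGraph.mem_neighborFinset T w v).mpr h.symm
        have : z = v := Finset.card_le_one.mp (by omega) z hzmem v hvmem
        exact hzS.2 this
    rw [hempty]
    simp
  -- S is regular
  have hregS : IsRegularSet T S := by
    intro a ha b hb
    rw [degN_eq_s13, degN_eq_s13, hdeg1 a ha, hdeg1 b hb]
  -- conclusion via sSup
  have hub : ∀ m ∈ {m : ℕ | ∃ S : Set V, S.ncard = m ∧ IsKIndepSet T k S ∧ IsRegularSet T S},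
      m ≤ n - 2 := by
    rintro m ⟨S', hS'card, -, hS'reg⟩
    rw [← hS'card]
    exact upper_bound hT hn hn8 hxy S' hS'reg
  have hmemM : (n - 2) ∈ {m : ℕ | ∃ S : Set V, S.ncard = m ∧ IsKIndepSet T k S ∧ IsRegularSet T S} :=
    ⟨S, hScard, hindep, hregS⟩
  have h1 : regKIndepNum T k ≤ n - 2 := csSup_le ⟨n - 2, hmemM⟩ hub
  have h2 : n - 2 ≤ regKIndepNum T k := le_csSup ⟨n - 2, hub⟩ hmemM
  omega
end

section
/- Let G be a finite simple graph with m ≥ 1 edges and let k ≥ 0 be an integer. Then α_{k-reg}(L(G)) ≥ m^{1/3} / (4 · χ_k(L(G))), where L(G) is the line graph of G. -/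
open SimpleGraph Finset

/-- The `k`-chromatic number `χ_k(G)`: the least number of colors needed so that every
color class is a `k`-independent set. -/
noncomputable def kChromNum {V : Type*} (G : SimpleGraph V) (k : ℕ) : ℕ :=
  sInf {c : ℕ | ∃ f : V → Fin c, ∀ i : Fin c, IsKIndepSet G k {v | f v = i}}

section helpers

variable {V : Type*} [Fintype V] [DecidableEq V] {G : SimpleGraph V} [DecidableRel G.Adj]

lemma degN_lineGraph (e : G.edgeSet) (a b : V) (hab : (e : Sym2 V) = s(a, b)) :
    degN G.lineGraph e + 2 = G.degree a + G.degree b := by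
  have hne : a ≠ b := by
    have := G.not_isDiag_of_mem_edgeSet e.2
    rw [hab] at this
    simpa using this
  have hae : a ∈ (e : Sym2 V) := by rw [hab]; simp
  have hbe : b ∈ (e : Sym2 V) := by rw [hab]; simp
  have himg : (Subtype.val '' {f : G.edgeSet | G.lineGraph.Adj e f})
      = (G.incidenceSet a ∪ G.incidenceSet b) \ {(e : Sym2 V)} := by
    ext f
    constructor
    · rintro ⟨g, hg, rfl⟩
      rw [Set.mem_setOf_eq, lineGraph_adj_iff_exists] at hg
      obtain ⟨hge, x, hxe, hxg⟩ := hg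
      rw [hab, Sym2.mem_iff] at hxe
      refine ⟨?_, by simpa using (Subtype.coe_injective.ne hge).symm⟩
      rcases hxe with rfl | rfl
      · exact Or.inl ⟨g.2, hxg⟩
      · exact Or.inr ⟨g.2, hxg⟩
    · rintro ⟨hf, hfe⟩
      have hfE : f ∈ G.edgeSet := by rcases hf with h | h <;> exact h.1
      refine ⟨⟨f, hfE⟩, ?_, rfl⟩
      rw [Set.mem_setOf_eq, lineGraph_adj_iff_exists]
      refine ⟨fun h => hfe (by rw [Set.mem_singleton_iff]; exact (congrArg Subtype.val h).symm), ?_⟩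
      rcases hf with h | h
      · exact ⟨a, hae, h.2⟩
      · exact ⟨b, hbe, h.2⟩
  have h1 : degN G.lineGraph e
      = ((G.incidenceSet a ∪ G.incidenceSet b) \ {(e : Sym2 V)}).ncard := by
    rw [degN, ← himg, Set.ncard_image_of_injective _ Subtype.val_injective]
  have hmem : (e : Sym2 V) ∈ G.incidenceSet a ∪ G.incidenceSet b := Or.inl ⟨e.2, hae⟩
  have h2 : ((G.incidenceSet a ∪ G.incidenceSet b) \ {(e : Sym2 V)}).ncard + 1
      = (G.incidenceSet a ∪ G.incidenceSet b).ncard :=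
    Set.ncard_diff_singleton_add_one hmem
  have h3 : (G.incidenceSet a ∪ G.incidenceSet b).ncard
      + (G.incidenceSet a ∩ G.incidenceSet b).ncard
      = (G.incidenceSet a).ncard + (G.incidenceSet b).ncard :=
    Set.ncard_union_add_ncard_inter _ _
  have h4 : G.incidenceSet a ∩ G.incidenceSet b = {(e : Sym2 V)} := by
    ext f
    constructor
    · rintro ⟨⟨hf, haf⟩, ⟨-, hbf⟩⟩
      have : f = s(a, b) := (Sym2.mem_and_mem_iff hne).1 ⟨haf, hbf⟩
      simp [this, hab]
    · rintro rfl
      exact ⟨⟨e.2, hae⟩, ⟨e.2, hbe⟩⟩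
  have h5 : ∀ x : V, (G.incidenceSet x).ncard = G.degree x := by
    intro x
    rw [Set.ncard_eq_toFinset_card']
    simpa [incidenceFinset] using G.card_incidenceFinset_eq_degree (v := x)
  rw [h4, Set.ncard_singleton] at h3
  rw [h5 a, h5 b] at h3
  omega

lemma exists_big_fiber (hne : Nonempty G.edgeSet) :
    ∃ D : ℕ, Fintype.card G.edgeSet
      ≤ 32 * (Finset.univ.filter (fun e : G.edgeSet => degN G.lineGraph e = D)).card ^ 3 := by
  set w : G.edgeSet → ℕ := fun e => degN G.lineGraph e with hw
  set m := Fintype.card G.edgeSet with hm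
  have hends : ∀ e : G.edgeSet, ∃ a b, G.Adj a b ∧ (e : Sym2 V) = s(a, b) := by
    rintro ⟨e, he⟩
    induction e using Sym2.ind with
    | _ a b => exact ⟨a, b, G.mem_edgeSet.mp he, rfl⟩
  obtain ⟨e₀⟩ := hne
  haveI hVne : Nonempty V := ⟨(hends e₀).choose⟩
  obtain ⟨v, -, hv⟩ := Finset.exists_max_image (α := ℕ) (Finset.univ : Finset V)
    (fun u => G.degree u) univ_nonempty
  set Δ := G.degree v with hΔ
  obtain ⟨D₀, hD₀mem, hD₀⟩ := Finset.exists_max_image (Finset.univ.image w)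
    (fun D => (univ.filter (fun e => w e = D)).card) ⟨w e₀, mem_image_of_mem w (mem_univ e₀)⟩
  set s := (univ.filter (fun e => w e = D₀)).card with hs
  refine ⟨D₀, ?_⟩
  have hfib : ∀ D : ℕ, (univ.filter (fun e => w e = D)).card ≤ s := by
    intro D
    by_cases hD : D ∈ univ.image w
    · exact hD₀ D hD
    · have : univ.filter (fun e => w e = D) = ∅ := by
        rw [filter_eq_empty_iff]
        intro e _ hwe
        exact hD (mem_image.2 ⟨e, mem_univ e, hwe⟩)
      simp [this]
  have hs1 : 1 ≤ s := by
    obtain ⟨e₁, -, he₁⟩ := mem_image.1 hD₀mem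
    exact card_pos.2 ⟨e₁, mem_filter.2 ⟨mem_univ e₁, he₁⟩⟩
  have hΔ1 : 1 ≤ Δ := by
    obtain ⟨a, b, hab, -⟩ := hends e₀
    have h0 : 0 < G.degree a := (G.degree_pos_iff_exists_adj a).2 ⟨b, hab⟩
    exact le_trans h0 (hv a (mem_univ a))
  have hw_ub : ∀ e : G.edgeSet, w e + 2 ≤ 2 * Δ := by
    intro e
    obtain ⟨a, b, hab, he⟩ := hends e
    rw [hw]
    simp only []
    rw [degN_lineGraph e a b he]
    have := hv a (mem_univ a)
    have := hv b (mem_univ b)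
    omega
  have hI' : m ≤ 2 * Δ * s := by
    have hcover : ∀ e ∈ (univ : Finset G.edgeSet), w e ∈ Finset.range (2 * Δ) :=
      fun e _ => mem_range.2 (by have := hw_ub e; omega)
    calc m = (univ : Finset G.edgeSet).card := by rw [card_univ]
      _ = ∑ D ∈ Finset.range (2 * Δ), (univ.filter (fun e => w e = D)).card :=
          Finset.card_eq_sum_card_fiberwise hcover
      _ ≤ (Finset.range (2 * Δ)).card • s :=
          Finset.sum_le_card_nsmul _ _ s (fun D _ => hfib D)
      _ = 2 * Δ * s := by rw [card_range, smul_eq_mul]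
  set τ := 8 * s with hτ
  set Hi := (univ : Finset V).filter (fun u => τ ≤ G.degree u) with hHidef
  have hHi : Hi.card * τ ≤ 2 * m := by
    have h1 : Hi.card • τ ≤ ∑ u ∈ Hi, G.degree u :=
      Finset.card_nsmul_le_sum Hi _ τ (fun u hu => (mem_filter.1 hu).2)
    have h2 : ∑ u ∈ Hi, G.degree u ≤ ∑ u, G.degree u :=
      Finset.sum_le_sum_of_subset (subset_univ Hi)
    have h3 : ∑ u, G.degree u = 2 * m := by
      rw [sum_degrees_eq_twice_card_edges, edgeFinset_card, hm]
    rw [smul_eq_mul] at h1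
    omega
  set Lo := (G.neighborFinset v).filter (fun u => ¬ τ ≤ G.degree u) with hLodef
  have hLo : Lo.card ≤ τ * s := by
    have hcover : ∀ u ∈ Lo, G.degree u ∈ Finset.Ioo 0 τ := by
      intro u hu
      obtain ⟨hu1, hu2⟩ := mem_filter.1 hu
      rw [mem_neighborFinset] at hu1
      exact Finset.mem_Ioo.2 ⟨(G.degree_pos_iff_exists_adj u).2 ⟨v, hu1.symm⟩, by omega⟩
    have hfibd : ∀ d ∈ Finset.Ioo 0 τ, (Lo.filter (fun u => G.degree u = d)).card ≤ s := by
      intro d _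
      have hinj : (Lo.filter (fun u => G.degree u = d)).card
          ≤ ((univ.filter (fun e => w e = Δ + d - 2)).image Subtype.val).card := by
        apply Finset.card_le_card_of_injOn (fun u => s(v, u))
        · intro u hu
          obtain ⟨hu1, hud⟩ := mem_filter.1 hu
          obtain ⟨hu2, -⟩ := mem_filter.1 hu1
          rw [mem_neighborFinset] at hu2
          have hmemE : s(v, u) ∈ G.edgeSet := G.mem_edgeSet.2 hu2
          refine mem_image.2 ⟨⟨s(v, u), hmemE⟩, mem_filter.2 ⟨mem_univ _, ?_⟩, rfl⟩
          have := degN_lineGraph (G := G) ⟨s(v, u), hmemE⟩ v u rfl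
          rw [hw]
          simp only []
          omega
        · intro u1 hu1 u2 hu2 h
          exact Sym2.congr_right.1 h
      have himgcard : ((univ.filter (fun e => w e = Δ + d - 2)).image Subtype.val).card
          = (univ.filter (fun e => w e = Δ + d - 2)).card :=
        Finset.card_image_of_injective _ Subtype.val_injective
      rw [himgcard] at hinj
      exact le_trans hinj (hfib _)
    calc Lo.card = ∑ d ∈ Finset.Ioo 0 τ, (Lo.filter (fun u => G.degree u = d)).card :=
          Finset.card_eq_sum_card_fiberwise hcover
      _ ≤ (Finset.Ioo 0 τ).card • s := Finset.sum_le_card_nsmul _ _ s hfibd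
      _ ≤ τ * s := by rw [smul_eq_mul, Nat.card_Ioo]; exact Nat.mul_le_mul_right s (by omega)
  have hsplit : Δ ≤ τ * s + Hi.card := by
    have hpart : ((G.neighborFinset v).filter (fun u => τ ≤ G.degree u)).card + Lo.card
        = (G.neighborFinset v).card := Finset.card_filter_add_card_filter_not _
    have hsub : ((G.neighborFinset v).filter (fun u => τ ≤ G.degree u)).card ≤ Hi.card :=
      Finset.card_le_card (fun u hu => mem_filter.2 ⟨mem_univ u, (mem_filter.1 hu).2⟩)
    have hdeg : (G.neighborFinset v).card = Δ := G.card_neighborFinset_eq_degree v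
    omega
  -- numeric chain
  have c1 : Δ * τ ≤ τ * s * τ + 2 * m := by
    calc Δ * τ ≤ (τ * s + Hi.card) * τ := Nat.mul_le_mul_right τ hsplit
      _ = τ * s * τ + Hi.card * τ := by ring
      _ ≤ τ * s * τ + 2 * m := by omega
  have c2 : m * τ ≤ 2 * s * (Δ * τ) := by
    calc m * τ ≤ (2 * Δ * s) * τ := Nat.mul_le_mul_right τ hI'
      _ = 2 * s * (Δ * τ) := by ring
  have c3 : m * τ ≤ 2 * s * (τ * s * τ) + 4 * (s * m) := by
    calc m * τ ≤ 2 * s * (τ * s * τ + 2 * m) := le_trans c2 (Nat.mul_le_mul_left _ c1)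
      _ = 2 * s * (τ * s * τ) + 4 * (s * m) := by ring
  have c4 : m * s * 8 ≤ 128 * s ^ 4 + 4 * (m * s) := by
    have e1 : m * τ = m * s * 8 := by rw [hτ]; ring
    have e2 : 2 * s * (τ * s * τ) = 128 * s ^ 4 := by rw [hτ]; ring
    have e3 : 4 * (s * m) = 4 * (m * s) := by ring
    rw [e1, e2, e3] at c3
    exact c3
  have c5 : 4 * (m * s) ≤ 128 * s ^ 4 := by omega
  have c6 : m * (4 * s) ≤ (32 * s ^ 3) * (4 * s) := by
    calc m * (4 * s) = 4 * (m * s) := by ring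
      _ ≤ 128 * s ^ 4 := c5
      _ = (32 * s ^ 3) * (4 * s) := by ring
  exact Nat.le_of_mul_le_mul_right c6 (by omega)

end helpers

/-- For a graph `G` with `m ≥ 1` edges,
`α_{k-reg}(L(G)) ≥ m^(1/3) / (4 χ_k(L(G)))`. -/
theorem stmt_14 {V : Type*} [Fintype V] (G : SimpleGraph V) (k : ℕ)
    (hm : 1 ≤ G.edgeSet.ncard) :
    (G.edgeSet.ncard : ℝ) ^ ((1 : ℝ) / 3) / (4 * (kChromNum (G.lineGraph) k : ℝ))
      ≤ (regKIndepNum (G.lineGraph) k : ℝ) := by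
  classical
  letI : DecidableEq V := Classical.decEq V
  letI : DecidableRel G.Adj := fun a b => Classical.dec _
  have hEne : G.edgeSet.Nonempty := by
    rw [← Set.ncard_pos (Set.toFinite _)]
    omega
  have hne : Nonempty G.edgeSet := hEne.to_subtype
  have hcard : G.edgeSet.ncard = Fintype.card G.edgeSet := by
    rw [Set.ncard_eq_toFinset_card', Set.toFinset_card]
  -- the coloring
  set χ := kChromNum G.lineGraph k with hχdef
  have hCne : {c : ℕ | ∃ f : G.edgeSet → Fin c,
      ∀ i : Fin c, IsKIndepSet G.lineGraph k {v | f v = i}}.Nonempty := by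
    refine ⟨Fintype.card G.edgeSet, Fintype.equivFin G.edgeSet, fun i e he => ?_⟩
    have hempty : {u | u ∈ {v : G.edgeSet | (Fintype.equivFin G.edgeSet) v = i}
        ∧ G.lineGraph.Adj e u} = ∅ := by
      ext u
      simp only [Set.mem_setOf_eq, Set.mem_empty_iff_false, iff_false, not_and]
      intro hu hadj
      exact hadj.ne ((Fintype.equivFin G.edgeSet).injective (he.trans hu.symm))
    rw [hempty]
    simp
  have hχmem : χ ∈ {c : ℕ | ∃ f : G.edgeSet → Fin c,
      ∀ i : Fin c, IsKIndepSet G.lineGraph k {v | f v = i}} := by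
    rw [hχdef, kChromNum]
    exact Nat.sInf_mem hCne
  obtain ⟨f, hf⟩ := hχmem
  have hχpos : 0 < χ := by
    rcases Nat.eq_zero_or_pos χ with h0 | h
    · exfalso
      obtain ⟨e⟩ := hne
      have := f e
      rw [h0] at this
      exact this.elim0
    · exact h
  -- big fiber
  obtain ⟨D₀, hbig⟩ := exists_big_fiber (G := G) hne
  set S₀ := Finset.univ.filter (fun e : G.edgeSet => degN G.lineGraph e = D₀) with hS₀
  set s := S₀.card with hs
  have hs1 : 1 ≤ s := by
    have hcpos : 0 < Fintype.card G.edgeSet := Fintype.card_pos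
    rcases Nat.eq_zero_or_pos s with h0 | h
    · exfalso
      have hz : (32 : ℕ) * 0 ^ 3 = 0 := by norm_num
      rw [h0, hz] at hbig
      omega
    · exact h
  -- pigeonhole over colors
  haveI : Nonempty (Fin χ) := ⟨⟨0, hχpos⟩⟩
  obtain ⟨i, -, hi⟩ := Finset.exists_max_image (Finset.univ : Finset (Fin χ))
    (fun j => (S₀.filter (fun e => f e = j)).card) univ_nonempty
  set T := S₀.filter (fun e => f e = i) with hT
  set c := T.card with hc
  have hsc : s ≤ χ * c := by
    calc s = ∑ j ∈ (Finset.univ : Finset (Fin χ)), (S₀.filter (fun e => f e = j)).card :=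
          Finset.card_eq_sum_card_fiberwise (fun e _ => Finset.mem_univ (f e))
      _ ≤ (Finset.univ : Finset (Fin χ)).card • c :=
          Finset.sum_le_card_nsmul _ _ c (fun j _ => hi j (Finset.mem_univ j))
      _ = χ * c := by rw [smul_eq_mul, Finset.card_univ, Fintype.card_fin]
  -- properties of T
  have hreg : IsRegularSet G.lineGraph (↑T : Set G.edgeSet) := by
    intro u hu v hv
    rw [Finset.mem_coe, hT, Finset.mem_filter, hS₀, Finset.mem_filter] at hu hv
    rw [hu.1.2, hv.1.2]
  have hkind : IsKIndepSet G.lineGraph k (↑T : Set G.edgeSet) := by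
    intro v hv
    have hvi : f v = i := by
      rw [Finset.mem_coe, hT, Finset.mem_filter] at hv
      exact hv.2
    have hsub : {u | u ∈ (↑T : Set G.edgeSet) ∧ G.lineGraph.Adj v u}
        ⊆ {u | u ∈ {x : G.edgeSet | f x = i} ∧ G.lineGraph.Adj v u} := by
      rintro u ⟨hu, ha⟩
      rw [Finset.mem_coe, hT, Finset.mem_filter] at hu
      exact ⟨hu.2, ha⟩
    exact le_trans (Set.ncard_le_ncard hsub (Set.toFinite _)) (hf i v hvi)
  -- lower bound on regKIndepNum
  set r := regKIndepNum G.lineGraph k with hr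
  have hrge : c ≤ r := by
    rw [hr, regKIndepNum]
    apply le_csSup
    · refine ⟨Fintype.card G.edgeSet, ?_⟩
      rintro n ⟨S, rfl, -, -⟩
      calc S.ncard ≤ (Set.univ : Set G.edgeSet).ncard :=
            Set.ncard_le_ncard (Set.subset_univ S) (Set.toFinite _)
        _ = Fintype.card G.edgeSet := by
            rw [Set.ncard_univ, Nat.card_eq_fintype_card]
    · exact ⟨↑T, Set.ncard_coe_finset T, hkind, hreg⟩
  -- final arithmetic
  have hrpos : 0 < r := by
    have : 0 < c := by
      by_contra h
      have : c = 0 := by omega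
      rw [this, mul_zero] at hsc
      omega
    omega
  have hfinal : G.edgeSet.ncard ≤ (4 * χ * r) ^ 3 := by
    calc G.edgeSet.ncard = Fintype.card G.edgeSet := hcard
      _ ≤ 32 * s ^ 3 := hbig
      _ ≤ 32 * (χ * c) ^ 3 := by
          exact Nat.mul_le_mul_left 32 (Nat.pow_le_pow_left hsc 3)
      _ ≤ 32 * (χ * r) ^ 3 := by
          exact Nat.mul_le_mul_left 32 (Nat.pow_le_pow_left
            (Nat.mul_le_mul_left χ hrge) 3)
      _ ≤ (4 * χ * r) ^ 3 := by
          have he : (4 * χ * r) ^ 3 = 64 * (χ * r) ^ 3 := by ring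
          rw [he]
          exact Nat.mul_le_mul_right _ (by norm_num)
  have hχR : (0:ℝ) < (χ : ℝ) := by exact_mod_cast hχpos
  rw [div_le_iff₀ (by positivity)]
  have h1 : ((G.edgeSet.ncard : ℝ)) ^ ((1:ℝ)/3)
      ≤ ((((4 * χ * r) ^ 3 : ℕ) : ℝ)) ^ ((1:ℝ)/3) := by
    apply Real.rpow_le_rpow (by positivity) (by exact_mod_cast hfinal) (by norm_num)
  have h2 : ((((4 * χ * r) ^ 3 : ℕ) : ℝ)) ^ ((1:ℝ)/3) = ((4 * χ * r : ℕ) : ℝ) := by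
    push_cast
    rw [← Real.rpow_natCast (4 * (χ:ℝ) * (r:ℝ)) 3, ← Real.rpow_mul (by positivity)]
    norm_num
  calc (G.edgeSet.ncard : ℝ) ^ ((1:ℝ)/3) ≤ ((4 * χ * r : ℕ) : ℝ) := h1.trans_eq h2
    _ = (r : ℝ) * (4 * (χ : ℝ)) := by push_cast; ring
end

section
/- Let G be a tree with m ≥ 1 edges and let k ≥ 0 be an integer. Then α_{k-reg}(L(G)) ≥ √m / (√30 · χ_k(L(G))), where L(G) is the line graph of G. -/
open SimpleGraph

/-!
An edge `uv` of `G` has degree `deg u + deg v - 2` in `L(G)`, so the edges with a given degree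
sum `deg u + deg v` form a regular set of `L(G)`; splitting it along an optimal `k`-colouring
shows that it has at most `ρ = χ_k(L(G)) · α_{k-reg}(L(G))` elements. It remains to see that a
tree with `m` edges has `m ≤ 30 ρ²`.

Edges whose ends both have degree at most 2 have degree sum 3 or 4; the others are counted by
the sum of the degrees that are at least 3, which the handshake lemma for trees bounds by
`3L - 6`, where `L` is the number of leaves. Hence `m ≤ 2ρ + 3L - 6`. The leaves whose neighbour
has degree `c` span edges of degree sum `c + 1`, so `L ≤ qρ`, where `q` is the number of distinct
degrees of neighbours of leaves; these are `q` distinct numbers `≥ 2` with sum at most `2m - L`,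
so `q(q + 3) + 2L ≤ 4m`. The three inequalities force `m ≤ 30 ρ²`.
-/

open Finset

section KIndependence

variable {W : Type*} {H : SimpleGraph W} {k : ℕ}

lemma IsKIndepSet.mono [Finite W] {S T : Set W} (hT : IsKIndepSet H k T) (hST : S ⊆ T) :
    IsKIndepSet H k S := fun v hv ↦
  (Set.ncard_le_ncard (t := {u | u ∈ T ∧ H.Adj v u}) (fun _ hu ↦ ⟨hST hu.1, hu.2⟩)
    (Set.toFinite _)).trans (hT v (hST hv))

lemma isKIndepSet_of_subsingleton {S : Set W} (hS : S.Subsingleton) : IsKIndepSet H k S := by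
  intro v hv
  have : {u | u ∈ S ∧ H.Adj v u} = ∅ :=
    Set.eq_empty_of_forall_notMem fun u hu ↦ hu.2.ne (hS hv hu.1)
  simp [this]

lemma IsRegularSet.mono {S T : Set W} (hT : IsRegularSet H T) (hST : S ⊆ T) :
    IsRegularSet H S := fun u hu v hv ↦ hT u (hST hu) v (hST hv)

lemma exists_coloring_kChromNum [Fintype W] (H : SimpleGraph W) (k : ℕ) :
    ∃ f : W → Fin (kChromNum H k), ∀ i, IsKIndepSet H k {v | f v = i} :=
  Nat.sInf_mem (s := {c | ∃ f : W → Fin c, ∀ i, IsKIndepSet H k {v | f v = i}})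
    ⟨_, Fintype.equivFin W, fun _ ↦ isKIndepSet_of_subsingleton fun _ hu _ hv ↦
      (Fintype.equivFin W).injective (hu.trans hv.symm)⟩

lemma ncard_le_regKIndepNum [Finite W] {S : Set W} (hind : IsKIndepSet H k S)
    (hreg : IsRegularSet H S) : S.ncard ≤ regKIndepNum H k :=
  le_csSup ⟨Nat.card W, by rintro _ ⟨T, rfl, -⟩; exact Set.ncard_le_card T⟩ ⟨S, rfl, hind, hreg⟩

lemma IsRegularSet.ncard_le_kChromNum_mul [Fintype W] {S : Set W} (hS : IsRegularSet H S) :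
    S.ncard ≤ kChromNum H k * regKIndepNum H k := by
  classical
  obtain ⟨f, hf⟩ := exists_coloring_kChromNum H k
  rw [Set.ncard_eq_toFinset_card', mul_comm, ← card_fin (kChromNum H k)]
  refine card_le_mul_card_image_of_maps_to (fun v _ ↦ mem_univ (f v)) _ fun i _ ↦ ?_
  rw [← Set.ncard_coe_finset]
  refine ncard_le_regKIndepNum ((hf i).mono fun v hv ↦ ?_) (hS.mono fun v hv ↦ ?_) <;>
    simp_all

end KIndependence

noncomputable def edgeDegreeSum {V : Type*} [Fintype V] (G : SimpleGraph V)
    [DecidableRel G.Adj] : Sym2 V → ℕ :=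
  Sym2.lift ⟨fun u v ↦ G.degree u + G.degree v, fun _ _ ↦ add_comm _ _⟩

@[simp]
lemma edgeDegreeSum_mk {V : Type*} [Fintype V] (G : SimpleGraph V) [DecidableRel G.Adj]
    (u v : V) : edgeDegreeSum G s(u, v) = G.degree u + G.degree v := rfl

section LineGraph

variable {V : Type*} [Fintype V] [DecidableEq V] {G : SimpleGraph V} [DecidableRel G.Adj]

lemma degN_lineGraph_add_two (e : G.edgeSet) : degN G.lineGraph e + 2 = edgeDegreeSum G e := by
  obtain ⟨e, he⟩ := e
  induction e using Sym2.ind with | _ u v => ?_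
  have huv : G.Adj u v := he
  have hnbr : Subtype.val '' {f | G.lineGraph.Adj ⟨s(u, v), he⟩ f} =
      ↑((G.incidenceFinset u ∪ G.incidenceFinset v).erase s(u, v)) := by
    ext f
    simp only [lineGraph_adj_iff_exists, ne_eq, Sym2.mem_iff, exists_eq_or_imp, ↓existsAndEq,
      true_and, Set.mem_image, Set.mem_ofPred_eq, Subtype.exists, Subtype.mk.injEq,
      exists_and_left, exists_prop, exists_eq_right_right, coe_erase, coe_union,
      coe_incidenceFinset, incidenceSet, Set.mem_sdiff, Set.mem_union, Set.mem_singleton_iff,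
      eq_comm (a := f)]
    tauto
  have hinter : G.incidenceFinset u ∩ G.incidenceFinset v = {s(u, v)} := by
    rw [← coe_inj]
    simpa using G.incidenceSet_inter_incidenceSet_of_adj huv
  have hmem : s(u, v) ∈ G.incidenceFinset u ∪ G.incidenceFinset v := by simp [huv]
  have hunion := card_union_add_card_inter (G.incidenceFinset u) (G.incidenceFinset v)
  rw [hinter, card_singleton, card_incidenceFinset_eq_degree,
    card_incidenceFinset_eq_degree] at hunion
  rw [degN, ← Set.ncard_image_of_injective _ Subtype.val_injective, hnbr, Set.ncard_coe_finset,
    card_erase_of_mem hmem, edgeDegreeSum_mk]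
  have := card_pos.2 ⟨_, hmem⟩
  omega

lemma card_filter_edgeDegreeSum_eq_le (k d : ℕ) :
    #{e ∈ G.edgeFinset | edgeDegreeSum G e = d} ≤
      kChromNum G.lineGraph k * regKIndepNum G.lineGraph k := by
  have hreg : IsRegularSet G.lineGraph {e | edgeDegreeSum G e = d} := fun a ha b hb ↦ by
    have ha' := degN_lineGraph_add_two a
    have hb' := degN_lineGraph_add_two b
    rw [show edgeDegreeSum G a = d from ha] at ha'
    rw [show edgeDegreeSum G b = d from hb] at hb'
    omega
  refine le_of_eq_of_le ?_ hreg.ncard_le_kChromNum_mul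
  rw [← Set.ncard_coe_finset, ← Set.ncard_image_of_injective _ Subtype.val_injective]
  congr 1
  ext e
  simp [and_comm]

end LineGraph

lemma card_mul_card_add_three_le_two_mul_sum (C : Finset ℕ) (hC : ∀ c ∈ C, 2 ≤ c) :
    #C * (#C + 3) ≤ 2 * ∑ c ∈ C, c := by
  induction C using Finset.induction_on_max with
  | empty => simp
  | insert a s hlt ih =>
    have ha : a ∉ s := fun h ↦ (hlt a h).false
    have hs : #s + 2 ≤ a := by
      have := card_le_card fun x hx ↦ mem_Ico.2 ⟨hC x (mem_insert_of_mem hx), hlt x hx⟩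
      rw [Nat.card_Ico] at this
      have := hC a (mem_insert_self a s)
      omega
    rw [card_insert_of_notMem ha, sum_insert ha]
    nlinarith [ih fun c hc ↦ hC c (mem_insert_of_mem hc)]

lemma le_thirty_mul_sq {m ρ L q : ℕ} (hρ : 1 ≤ ρ) (hm : m + 6 ≤ 2 * ρ + 3 * L)
    (hL : L ≤ ρ * q) (hq : q * (q + 3) + 2 * L ≤ 4 * m) : m ≤ 30 * ρ ^ 2 := by
  have hq10 : q + 1 ≤ 10 * ρ := by
    by_contra! h
    nlinarith
  nlinarith

namespace SimpleGraph

variable {V : Type*} [Fintype V] {G : SimpleGraph V} [DecidableRel G.Adj]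

variable (G) in
def leaves : Finset V := {v | G.degree v = 1}

variable (G) in
def leafNeighborDegrees : Finset ℕ :=
  image (fun v ↦ G.degree v) {v | 2 ≤ G.degree v ∧ ∃ ℓ, G.Adj v ℓ ∧ G.degree ℓ = 1}

lemma Connected.card_edgeFinset_le_one_of_adj [DecidableEq V] (hG : G.Connected) {u v : V}
    (huv : G.Adj u v) (hu : G.degree u = 1) (hv : G.degree v = 1) : #G.edgeFinset ≤ 1 := by
  have hclosed : ∀ {w x : V}, G.Adj w x → x = u ∨ x = v → w = u ∨ w = v := by
    rintro w x hwx (rfl | rfl)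
    · exact .inr ((degree_eq_one_iff_existsUnique_adj.1 hu).unique hwx.symm huv)
    · exact .inl ((degree_eq_one_iff_existsUnique_adj.1 hv).unique hwx.symm huv.symm)
  have hall (w : V) : w = u ∨ w = v := by
    obtain ⟨p⟩ := hG.preconnected w u
    suffices ∀ {w x : V}, G.Walk w x → x = u ∨ x = v → w = u ∨ w = v from this p (.inl rfl)
    intro w x p
    induction p with
    | nil => exact id
    | cons h _ ih => exact hclosed h ∘ ih
  calc #G.edgeFinset ≤ #{s(u, v)} := card_le_card fun e he ↦ by
        induction e using Sym2.ind with | _ a b => ?_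
        have hab : G.Adj a b := mem_edgeFinset.1 he
        rcases hall a with rfl | rfl <;> rcases hall b with rfl | rfl <;> simp_all
    _ = 1 := card_singleton _

lemma Connected.degree_pos [DecidableEq V] (hG : G.Connected) (hE : G.edgeFinset.Nonempty)
    (v : V) : 0 < G.degree v := by
  obtain ⟨e, he⟩ := hE
  induction e using Sym2.ind with | _ a b => ?_
  have : Nontrivial V := ⟨a, b, (mem_edgeFinset.1 he).ne⟩
  exact hG.preconnected.degree_pos_of_nontrivial v

lemma IsTree.sum_degree_add_six_le [DecidableEq V] [Nontrivial V] (hG : G.IsTree) :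
    ∑ v with 3 ≤ G.degree v, G.degree v + 6 ≤ 3 * #G.leaves := by
  -- summed over all vertices, this pointwise bound and `∑ deg = 2 (|V| - 1)` give the claim
  have hpt (v : V) : (if 3 ≤ G.degree v then G.degree v else 0) + 6 ≤
      (if G.degree v = 1 then 3 else 0) + 3 * G.degree v := by
    have := hG.connected.preconnected.degree_pos_of_nontrivial v
    split_ifs <;> omega
  have hsum := sum_le_sum fun v (_ : v ∈ univ) ↦ hpt v
  rw [sum_add_distrib, sum_add_distrib, ← sum_filter, ← sum_filter, ← mul_sum,
    sum_degrees_eq_twice_card_edges, sum_const, sum_const, card_univ,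
    ← hG.card_edgeFinset] at hsum
  simp only [leaves, smul_eq_mul] at hsum ⊢
  omega

lemma Connected.card_edgeFinset_le [DecidableEq V] (hG : G.Connected)
    (hm : 2 ≤ #G.edgeFinset) :
    #G.edgeFinset ≤ #{e ∈ G.edgeFinset | edgeDegreeSum G e = 3} +
      #{e ∈ G.edgeFinset | edgeDegreeSum G e = 4} + ∑ v with 3 ≤ G.degree v, G.degree v := by
  have hpos := hG.degree_pos (card_pos.1 (by omega))
  have hcover : G.edgeFinset ⊆ {e ∈ G.edgeFinset | edgeDegreeSum G e = 3} ∪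
      {e ∈ G.edgeFinset | edgeDegreeSum G e = 4} ∪
      ({v | 3 ≤ G.degree v} : Finset V).biUnion (fun v ↦ G.incidenceFinset v) := by
    intro e he
    induction e using Sym2.ind with | _ a b => ?_
    have hab : G.Adj a b := mem_edgeFinset.1 he
    have hleaves : ¬(G.degree a = 1 ∧ G.degree b = 1) := fun h ↦ by
      have := hG.card_edgeFinset_le_one_of_adj hab h.1 h.2
      omega
    have := hpos a
    have := hpos b
    simp only [mem_union, mem_filter, edgeDegreeSum_mk, mem_biUnion, mem_incidenceFinset,
      mk'_mem_incidenceSet_iff, he, true_and, mem_univ, hab]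
    by_cases ha : 3 ≤ G.degree a
    · exact .inr ⟨a, ha, by simp⟩
    by_cases hb : 3 ≤ G.degree b
    · exact .inr ⟨b, hb, by simp⟩
    omega
  refine (card_le_card hcover).trans <| (card_union_le _ _).trans <|
    add_le_add (card_union_le _ _) (card_biUnion_le.trans_eq ?_)
  exact sum_congr rfl fun v _ ↦ G.card_incidenceFinset_eq_degree v

lemma Connected.card_leaves_le [DecidableEq V] (hG : G.Connected) (hm : 2 ≤ #G.edgeFinset)
    {ρ : ℕ} (hρ : ∀ d, #{e ∈ G.edgeFinset | edgeDegreeSum G e = d} ≤ ρ) :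
    #G.leaves ≤ ρ * #G.leafNeighborDegrees := by
  have hpos := hG.degree_pos (card_pos.1 (by omega))
  choose nbr hnbr using fun ℓ ↦ (G.degree_pos_iff_exists_adj ℓ).1 (hpos ℓ)
  have hnbr_deg {ℓ : V} (hℓ : ℓ ∈ G.leaves) : 2 ≤ G.degree (nbr ℓ) := by
    have hℓ : G.degree ℓ = 1 := (mem_filter.1 hℓ).2
    by_contra! h
    have := hG.card_edgeFinset_le_one_of_adj (hnbr ℓ) hℓ (by have := hpos (nbr ℓ); omega)
    omega
  refine card_le_mul_card_image_of_maps_to (f := fun ℓ ↦ G.degree (nbr ℓ)) (fun ℓ hℓ ↦ ?_) ρ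
    fun c _ ↦ ?_
  · refine mem_image.2 ⟨nbr ℓ, mem_filter.2 ⟨mem_univ _, hnbr_deg hℓ, ℓ, (hnbr ℓ).symm, ?_⟩, rfl⟩
    exact (mem_filter.1 hℓ).2
  -- a leaf whose neighbour has degree `c` spans an edge of degree sum `c + 1`
  refine (card_le_card_of_injOn (fun ℓ ↦ s(ℓ, nbr ℓ))
    (t := {e ∈ G.edgeFinset | edgeDegreeSum G e = c + 1}) ?_ ?_).trans (hρ _)
  · intro ℓ hℓ
    simp only [mem_coe, mem_filter, leaves, mem_univ, true_and] at hℓ ⊢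
    exact ⟨mem_edgeFinset.2 (hnbr ℓ), by rw [edgeDegreeSum_mk, hℓ.1, hℓ.2, add_comm]⟩
  · intro a ha b hb hab
    have ha' := hnbr_deg (mem_filter.1 ha).1
    have hb' := (mem_filter.1 (mem_filter.1 hb).1).2
    rcases Sym2.eq_iff.1 hab with ⟨h, -⟩ | ⟨-, h⟩
    · exact h
    · rw [h] at ha'
      omega

lemma sum_leafNeighborDegrees_add_card_leaves_le [DecidableEq V] :
    ∑ c ∈ G.leafNeighborDegrees, c + #G.leaves ≤ 2 * #G.edgeFinset := by
  have hleaves : ∑ v ∈ G.leaves, G.degree v = #G.leaves := by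
    rw [card_eq_sum_ones]
    exact sum_congr rfl fun v hv ↦ (mem_filter.1 hv).2
  have hsupp : ∑ c ∈ G.leafNeighborDegrees, c ≤ ∑ v with ¬G.degree v = 1, G.degree v :=
    (sum_image_le_of_nonneg fun _ _ ↦ Nat.zero_le _).trans <|
      sum_le_sum_of_subset fun v hv ↦ by
        simp only [mem_filter, mem_univ, true_and] at hv ⊢
        omega
  rw [← sum_degrees_eq_twice_card_edges, ← sum_filter_add_sum_filter_not univ (G.degree · = 1)]
  simp only [leaves] at hleaves ⊢
  omega

lemma two_le_of_mem_leafNeighborDegrees {c : ℕ} (hc : c ∈ G.leafNeighborDegrees) : 2 ≤ c := by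
  obtain ⟨v, hv, rfl⟩ := mem_image.1 hc
  exact (mem_filter.1 hv).2.1

theorem IsTree.card_edgeFinset_le_thirty_mul_sq [DecidableEq V] (hG : G.IsTree) {ρ : ℕ}
    (hρ : ∀ d, #{e ∈ G.edgeFinset | edgeDegreeSum G e = d} ≤ ρ) :
    #G.edgeFinset ≤ 30 * ρ ^ 2 := by
  obtain hE | ⟨e, he⟩ := G.edgeFinset.eq_empty_or_nonempty
  · simp [hE]
  have hρ1 : 1 ≤ ρ :=
    (hρ (edgeDegreeSum G e)).trans' (card_pos.2 ⟨e, mem_filter.2 ⟨he, rfl⟩⟩)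
  obtain hm | hm := lt_or_ge #G.edgeFinset 2
  · nlinarith
  have : Nontrivial V := by
    induction e using Sym2.ind with | _ a b => exact ⟨a, b, (mem_edgeFinset.1 he).ne⟩
  have hedges := hG.connected.card_edgeFinset_le hm
  have hbranch := hG.sum_degree_add_six_le
  have hsupp := card_mul_card_add_three_le_two_mul_sum G.leafNeighborDegrees
    fun _ ↦ two_le_of_mem_leafNeighborDegrees
  have hsum := G.sum_leafNeighborDegrees_add_card_leaves_le
  refine le_thirty_mul_sq hρ1 ?_ (hG.connected.card_leaves_le hm hρ) ?_
  · have := hρ 3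
    have := hρ 4
    omega
  · omega

end SimpleGraph

theorem stmt_15_general {V : Type*} [Fintype V] (G : SimpleGraph V) (hG : G.IsTree) (k : ℕ) :
    Real.sqrt (G.edgeSet.ncard) / (Real.sqrt 30 * (kChromNum (G.lineGraph) k : ℝ))
      ≤ (regKIndepNum (G.lineGraph) k : ℝ) := by
  classical
  set χ := kChromNum G.lineGraph k
  set α := regKIndepNum G.lineGraph k
  have hm : (G.edgeSet.ncard : ℝ) ≤ 30 * (χ * α) ^ 2 := by
    rw [← coe_edgeFinset, Set.ncard_coe_finset]
    exact_mod_cast hG.card_edgeFinset_le_thirty_mul_sq (card_filter_edgeDegreeSum_eq_le k)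
  -- no case split on `χ = 0` is needed: there the left side is `x / 0 = 0`
  refine div_le_of_le_mul₀ (by positivity) (by positivity) ?_
  calc Real.sqrt (G.edgeSet.ncard) ≤ Real.sqrt (30 * (χ * α) ^ 2) := Real.sqrt_le_sqrt hm
    _ = α * (Real.sqrt 30 * χ) := by
      rw [Real.sqrt_mul (by norm_num), Real.sqrt_sq (by positivity)]
      ring

/-- For a tree `G` with `m ≥ 1` edges,
`α_{k-reg}(L(G)) ≥ √m / (√30 · χ_k(L(G)))`. -/
theorem stmt_15 {V : Type*} [Fintype V] (G : SimpleGraph V) (hG : G.IsTree) (k : ℕ)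
    (hm : 1 ≤ G.edgeSet.ncard) :
    Real.sqrt (G.edgeSet.ncard) / (Real.sqrt 30 * (kChromNum (G.lineGraph) k : ℝ))
      ≤ (regKIndepNum (G.lineGraph) k : ℝ) :=
  stmt_15_general G hG k
end

section
/- Let G be a finite simple graph on n ≥ 2 vertices, let Ḡ denote its complement, and let k ≥ 0 be an integer. Then α_{k-reg}(G) + α_{k-reg}(Ḡ) = 2n if and only if there exists a nonnegative integer h such that G is h-regular (every vertex of G has degree h) and k ≥ max{h, n − 1 − h}; moreover this holds if and only if α_{k-reg}(G) · α_{k-reg}(Ḡ) = n². -/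
open SimpleGraph

lemma degN_add {V : Type*} [Fintype V] (G : SimpleGraph V) (v : V) :
    degN G v + degN Gᶜ v = Fintype.card V - 1 := by
  classical
  have hdisj : Disjoint {u | G.Adj v u} {u | Gᶜ.Adj v u} := by
    rw [Set.disjoint_left]
    intro u hu hu'
    exact hu'.2 hu
  have hu : {u | G.Adj v u} ∪ {u | Gᶜ.Adj v u} = {v}ᶜ := by
    ext u
    simp only [Set.mem_union, Set.mem_setOf_eq, compl_adj, Set.mem_compl_iff,
      Set.mem_singleton_iff]
    constructor
    · rintro (h | h)
      · exact fun e => by subst e; exact G.irrefl h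
      · exact fun e => h.1 e.symm
    · intro h
      by_cases hadj : G.Adj v u
      · exact Or.inl hadj
      · exact Or.inr ⟨fun e => h e.symm, hadj⟩
  have := Set.ncard_union_eq hdisj (Set.toFinite _) (Set.toFinite _)
  rw [hu] at this
  have h2 : ({v} : Set V).ncard + ({v}ᶜ : Set V).ncard = Nat.card V :=
    Set.ncard_add_ncard_compl _ (Set.toFinite _) (Set.toFinite _)
  rw [Set.ncard_singleton] at h2
  rw [degN, degN, ← this]
  have h3 : Nat.card V = Fintype.card V := Nat.card_eq_fintype_card
  omega

lemma degN_compl {V : Type*} [Fintype V] (G : SimpleGraph V) (v : V) :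
    degN Gᶜ v = Fintype.card V - 1 - degN G v := by
  have := degN_add G v; omega

lemma regKIndep_le {V : Type*} [Fintype V] (G : SimpleGraph V) (k : ℕ) :
    regKIndepNum G k ≤ Fintype.card V := by
  refine csSup_le ?_ ?_
  · exact ⟨0, ⟨∅, by simp [IsKIndepSet, IsRegularSet]⟩⟩
  rintro m ⟨S, rfl, -⟩
  simpa [Set.ncard_univ, Nat.card_eq_fintype_card] using Set.ncard_le_ncard (Set.subset_univ S) (Set.toFinite _)

lemma regKIndep_eq_card {V : Type*} [Fintype V] (G : SimpleGraph V) (k : ℕ) :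
    regKIndepNum G k = Fintype.card V ↔
      (∀ v : V, degN G v ≤ k) ∧ IsRegularSet G Set.univ := by
  classical
  constructor
  · intro h
    have hne : {m : ℕ | ∃ S : Set V, S.ncard = m ∧ IsKIndepSet G k S ∧ IsRegularSet G S}.Nonempty :=
      ⟨0, ⟨∅, by simp [IsKIndepSet, IsRegularSet]⟩⟩
    have hbdd : BddAbove {m : ℕ | ∃ S : Set V, S.ncard = m ∧ IsKIndepSet G k S ∧ IsRegularSet G S} := by
      refine ⟨Fintype.card V, ?_⟩
      rintro m ⟨S, rfl, -⟩
      simpa [Set.ncard_univ, Nat.card_eq_fintype_card] using Set.ncard_le_ncard (Set.subset_univ S) (Set.toFinite _)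
    obtain ⟨S, hS, hk, hr⟩ := Nat.sSup_mem hne hbdd
    rw [regKIndepNum] at h
    rw [h] at hS
    have hSu : S = Set.univ := by
      have h4 : (Set.univ : Set V).ncard = Fintype.card V := by
        simp [Set.ncard_univ, Nat.card_eq_fintype_card]
      exact Set.eq_of_subset_of_ncard_le (Set.subset_univ S) (by omega) (Set.toFinite _)
    subst hSu
    constructor
    · intro v
      have := hk v (Set.mem_univ v)
      simpa [degN] using this
    · exact hr
  · rintro ⟨h1, h2⟩
    apply le_antisymm (regKIndep_le G k)
    apply le_csSup
    · refine ⟨Fintype.card V, ?_⟩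
      rintro m ⟨S, rfl, -⟩
      simpa [Set.ncard_univ, Nat.card_eq_fintype_card] using Set.ncard_le_ncard (Set.subset_univ S) (Set.toFinite _)
    · exact ⟨Set.univ, by simp [Set.ncard_univ, Nat.card_eq_fintype_card],
        fun v _ => by simpa [degN] using h1 v, h2⟩

/-- For a graph `G` on `n ≥ 2` vertices, `α_{k-reg}(G) + α_{k-reg}(Ḡ) = 2n` iff `G` is
`h`-regular for some `h` with `k ≥ max {h, n - 1 - h}`; moreover this holds iff
`α_{k-reg}(G) · α_{k-reg}(Ḡ) = n²`. -/
theorem stmt_19 {V : Type*} [Fintype V] (G : SimpleGraph V) (k : ℕ)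
    (hn : 2 ≤ Fintype.card V) :
    (regKIndepNum G k + regKIndepNum Gᶜ k = 2 * Fintype.card V ↔
      ∃ h : ℕ, (∀ v : V, degN G v = h) ∧ max h (Fintype.card V - 1 - h) ≤ k) ∧
    (regKIndepNum G k + regKIndepNum Gᶜ k = 2 * Fintype.card V ↔
      regKIndepNum G k * regKIndepNum Gᶜ k = Fintype.card V ^ 2) := by
  have hle1 := regKIndep_le G k
  have hle2 := regKIndep_le Gᶜ k
  have hV : Nonempty V := Fintype.card_pos_iff.mp (by omega)
  have key : regKIndepNum G k + regKIndepNum Gᶜ k = 2 * Fintype.card V ↔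
      regKIndepNum G k = Fintype.card V ∧ regKIndepNum Gᶜ k = Fintype.card V := by omega
  constructor
  · rw [key, regKIndep_eq_card, regKIndep_eq_card]
    constructor
    · rintro ⟨⟨h1, h2⟩, ⟨h3, h4⟩⟩
      obtain ⟨v0⟩ := hV
      refine ⟨degN G v0, fun v => h2 v (Set.mem_univ v) v0 (Set.mem_univ v0), ?_⟩
      have := degN_compl G v0
      have := h1 v0
      have := h3 v0
      omega
    · rintro ⟨h, hreg, hk⟩
      refine ⟨⟨fun v => by rw [hreg v]; omega, fun u _ v _ => by rw [hreg u, hreg v]⟩,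
        ⟨fun v => ?_, fun u _ v _ => ?_⟩⟩
      · rw [degN_compl, hreg v]; omega
      · rw [degN_compl, degN_compl, hreg u, hreg v]
  · rw [key]
    constructor
    · rintro ⟨h1, h2⟩; rw [h1, h2, sq]
    · intro h
      set n := Fintype.card V
      set a := regKIndepNum G k
      set b := regKIndepNum Gᶜ k
      constructor <;> nlinarith [sq_nonneg (a - b), sq_nonneg n]
end
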